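/- arXiv:2601.22789 — 6 statements merged into one kernel-verified Lean document; each statement's English description precedes it below -/
import Mathlib

section
/- Let A be a finitely generated free abelian group, let m ≥ 2 be an integer, and set A₀ := m·A (the subgroup of m-th multiples). Then: (1) every determinant-1 automorphism of A maps A₀ onto itself, i.e. SL_{A₀}(A) = SL(A); and (2) for any basis e₁,…,e_n of A, the group Elem^{A₀}(A) equals the normal closure in SL(A) of the subgroup generated by the m-th powers of the basic elementary automorphisms E_{ij} (for i ≠ j), where E_{ij} is the automorphism of A sending e_j to e_j + e_i and fixing e_l for every l ≠ j. -/
/-- `SL(A)`: the group of automorphisms of determinant `1` of the `ℤ`-module `A`. -/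
noncomputable def SLAut (A : Type*) [AddCommGroup A] : Subgroup (A ≃ₗ[ℤ] A) :=
  (LinearEquiv.det : (A ≃ₗ[ℤ] A) →* ℤˣ).ker

/-- An `A₀`-local elementary automorphism of `A`. -/
def IsLocalElementary {A : Type*} [AddCommGroup A] (A₀ : AddSubgroup A)
    (f : A ≃ₗ[ℤ] A) : Prop :=
  ∃ (l : A →ₗ[ℤ] ℤ) (c : A), Function.Surjective l ∧ c ∈ A₀ ∧ l c = 0 ∧
    ∀ v : A, f v = v + l v • c

/-- `Elem^{A₀}(A)`. -/
noncomputable def ElemSubgroup {A : Type*} [AddCommGroup A] (A₀ : AddSubgroup A) :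
    Subgroup (A ≃ₗ[ℤ] A) :=
  Subgroup.closure {f | IsLocalElementary A₀ f}

/-- The subgroup of `N`-th multiples `N • A` of `A`. -/
def multiplesSubgroup (A : Type*) [AddCommGroup A] (N : ℤ) : AddSubgroup A :=
  (DistribMulAction.toAddMonoidHom A N).range

section Trv

variable {A : Type*} [AddCommGroup A]

/-- The transvection `v ↦ v + l v • w`, for `l w = 0`. -/
def trv (l : A →ₗ[ℤ] ℤ) (w : A) (h : l w = 0) : A ≃ₗ[ℤ] A :=
  LinearEquiv.ofLinear (LinearMap.id + l.smulRight w) (LinearMap.id - l.smulRight w)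
    (by ext v; simp [h, mul_comm]) (by ext v; simp [h, mul_comm])

@[simp] lemma trv_apply (l : A →ₗ[ℤ] ℤ) (w : A) (h : l w = 0) (v : A) :
    trv l w h v = v + l v • w := rfl

lemma trv_zero (l : A →ₗ[ℤ] ℤ) (h : l 0 = 0) : trv l 0 h = 1 := by
  ext v; simp

lemma trv_mul (l : A →ₗ[ℤ] ℤ) (w w' : A) (h : l w = 0) (h' : l w' = 0) :
    trv l w h * trv l w' h' = trv l (w + w') (by rw [map_add, h, h', add_zero]) := by
  ext v
  show trv l w h (trv l w' h' v) = _
  simp [h', smul_add, add_smul]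
  abel

lemma trv_pow (l : A →ₗ[ℤ] ℤ) (w : A) (h : l w = 0) (k : ℕ) :
    trv l w h ^ k = trv l (k • w) (by rw [map_nsmul, h, smul_zero]) := by
  induction k with
  | zero => simpa using (trv_zero l _).symm
  | succ k ih =>
      rw [pow_succ, ih, trv_mul]
      congr 1
      rw [succ_nsmul]

lemma trv_congr (l l' : A →ₗ[ℤ] ℤ) (w w' : A) (h : l w = 0) (hl : l = l') (hw : w = w') :
    trv l w h = trv l' w' (by rw [← hl, ← hw]; exact h) := by
  subst hl hw; rfl

lemma trv_inv (l : A →ₗ[ℤ] ℤ) (w : A) (h : l w = 0) :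
    (trv l w h)⁻¹ = trv l (-w) (by rw [map_neg, h, neg_zero]) := by
  symm
  apply eq_inv_of_mul_eq_one_left
  rw [trv_mul]
  rw [trv_congr l l (-w + w) 0 _ rfl (by abel), trv_zero]

lemma trv_zpow (l : A →ₗ[ℤ] ℤ) (w : A) (h : l w = 0) (k : ℤ) :
    trv l w h ^ k = trv l (k • w) (by rw [map_zsmul, h, smul_zero]) := by
  rcases k with k | k
  · rw [Int.ofNat_eq_coe, zpow_natCast, trv_pow]
    exact trv_congr l l _ _ _ rfl (by simp)
  · rw [zpow_negSucc, trv_pow, trv_inv]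
    exact trv_congr l l _ _ _ rfl (by rw [Int.negSucc_eq, neg_smul]; norm_cast)

@[simp] lemma linearEquiv_inv_apply (f : A ≃ₗ[ℤ] A) (v : A) : f⁻¹ v = f.symm v := rfl

lemma trv_conj (l : A →ₗ[ℤ] ℤ) (w : A) (h : l w = 0) (f : A ≃ₗ[ℤ] A) :
    f * trv l w h * f⁻¹ =
      trv (l ∘ₗ (f⁻¹ : A ≃ₗ[ℤ] A).toLinearMap) (f w)
        (by simp [h]) := by
  ext v
  show f (trv l w h (f⁻¹ v)) = _
  simp

/-- `trv` sums in a subgroup. -/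
lemma trv_sum_mem {κ : Type*} [DecidableEq κ] (M : Subgroup (A ≃ₗ[ℤ] A))
    (l : A →ₗ[ℤ] ℤ) (w : κ → A) (h : ∀ k, l (w k) = 0) (s : Finset κ)
    (hm : ∀ k ∈ s, ∀ hk, trv l (w k) hk ∈ M) :
    ∀ hs, trv l (∑ k ∈ s, w k) hs ∈ M := by
  induction s using Finset.induction_on with
  | empty =>
      intro hs
      have h1 : trv l (∑ k ∈ (∅ : Finset κ), w k) hs = 1 :=
        (trv_congr l l _ 0 _ rfl (by simp)).trans (trv_zero l (map_zero l))
      rw [h1]; exact one_mem M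
  | @insert a s ha ih =>
      intro hs
      have hss : l (∑ k ∈ s, w k) = 0 := by
        rw [map_sum]; exact Finset.sum_eq_zero fun k _ => h k
      have key : trv l (∑ k ∈ insert a s, w k) hs
          = trv l (w a) (h a) * trv l (∑ k ∈ s, w k) hss := by
        rw [trv_mul]
        exact trv_congr l l _ _ _ rfl (Finset.sum_insert ha)
      rw [key]
      exact mul_mem (hm a (Finset.mem_insert_self a s) _)
        (ih (fun k hk => hm k (Finset.mem_insert_of_mem hk)) _)

end Trv

section Det

variable {A : Type*} [AddCommGroup A] [Module.Free ℤ A] [Module.Finite ℤ A]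

/-- An adapted basis for a functional taking value 1 somewhere. -/
noncomputable def adaptedBasis (l : A →ₗ[ℤ] ℤ) (x : A) (hx : l x = 1) :
    Module.Basis (Fin ((Submodule.basisOfPid (Module.finBasis ℤ A) (LinearMap.ker l)).1 + 1)) ℤ A :=
  Module.Basis.mkFinCons x (Submodule.basisOfPid (Module.finBasis ℤ A) (LinearMap.ker l)).2
    (fun c z hz hcz => by
      have := congrArg l hcz
      simp [hx, (LinearMap.mem_ker).mp hz] at this
      exact this)
    (fun z => ⟨-l z, by simp [hx]⟩)

lemma adaptedBasis_zero (l : A →ₗ[ℤ] ℤ) (x : A) (hx : l x = 1) :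
    adaptedBasis l x hx 0 = x := by
  rw [adaptedBasis, Module.Basis.coe_mkFinCons]
  rfl

lemma adaptedBasis_succ (l : A →ₗ[ℤ] ℤ) (x : A) (hx : l x = 1)
    (k : Fin (Submodule.basisOfPid (Module.finBasis ℤ A) (LinearMap.ker l)).1) :
    l (adaptedBasis l x hx k.succ) = 0 := by
  rw [adaptedBasis, Module.Basis.coe_mkFinCons]
  simpa using ((Submodule.basisOfPid (Module.finBasis ℤ A) (LinearMap.ker l)).2 k).2

lemma repr_eq_zero_of_ker (l : A →ₗ[ℤ] ℤ) (x : A) (hx : l x = 1) (z : A) (hz : l z = 0) :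
    (adaptedBasis l x hx).repr z 0 = 0 := by
  set d := (Submodule.basisOfPid (Module.finBasis ℤ A) (LinearMap.ker l)).2 with hd
  have hmem : z ∈ LinearMap.ker l := hz
  have hsucc : ∀ k, ((d k : A)) = adaptedBasis l x hx k.succ := by
    intro k
    rw [adaptedBasis, Module.Basis.coe_mkFinCons]
    simp [hd]
  have hrep : z = ∑ k, (d.repr ⟨z, hmem⟩ k) • (adaptedBasis l x hx k.succ) := by
    have := congrArg (Subtype.val) (Module.Basis.sum_repr d ⟨z, hmem⟩).symm
    simpa only [Submodule.coe_sum, Submodule.coe_smul, hsucc] using this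
  rw [hrep]
  simp only [map_sum, map_smul]
  rw [Finsupp.coe_finset_sum]
  simp [Module.Basis.repr_self, Finsupp.single_apply, (Fin.succ_ne_zero _)]

lemma exists_sum_succ (l : A →ₗ[ℤ] ℤ) (x : A) (hx : l x = 1) (z : A) (hz : l z = 0) :
    ∃ a : Fin (Submodule.basisOfPid (Module.finBasis ℤ A) (LinearMap.ker l)).1 → ℤ,
      z = ∑ k, a k • adaptedBasis l x hx (Fin.succ k) := by
  set d := (Submodule.basisOfPid (Module.finBasis ℤ A) (LinearMap.ker l)).2 with hd
  have hmem : z ∈ LinearMap.ker l := hz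
  have hsucc : ∀ k, ((d k : A)) = adaptedBasis l x hx k.succ := by
    intro k
    rw [adaptedBasis, Module.Basis.coe_mkFinCons]
    simp [hd]
  refine ⟨fun k => d.repr ⟨z, hmem⟩ k, ?_⟩
  have := congrArg (Subtype.val) (Module.Basis.sum_repr d ⟨z, hmem⟩).symm
  simpa only [Submodule.coe_sum, Submodule.coe_smul, hsucc] using this

lemma trv_det (l : A →ₗ[ℤ] ℤ) (w : A) (h : l w = 0) (x : A) (hx : l x = 1) :
    LinearEquiv.det (trv l w h) = 1 := by
  set B := adaptedBasis l x hx with hBdef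
  apply Units.ext
  rw [LinearEquiv.coe_det, Units.val_one]
  rw [← LinearMap.det_toMatrix B]
  set M := LinearMap.toMatrix B B (trv l w h).toLinearMap with hM
  have hMij : ∀ i j, M i j = B.repr (B j + l (B j) • w) i := by
    intro i j
    rw [hM, LinearMap.toMatrix_apply]
    rfl
  have hcases : ∀ j : Fin _, l (B j) = 0 ∨ (j = 0 ∧ B j = x) := by
    intro j
    rcases Fin.eq_zero_or_eq_succ j with rfl | ⟨k, rfl⟩
    · exact Or.inr ⟨rfl, adaptedBasis_zero l x hx⟩
    · exact Or.inl (adaptedBasis_succ l x hx k)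
  have htri : M.BlockTriangular ⇑OrderDual.toDual := by
    intro i j hij
    have hij' : (i : Fin _) < j := hij
    rcases hcases j with h0 | ⟨rfl, -⟩
    · rw [hMij, h0]
      simp [Module.Basis.repr_self, Finsupp.single_apply, ne_of_gt hij']
    · exact absurd hij' (by simp)
  rw [Matrix.det_of_lowerTriangular M htri]
  have hdiag : ∀ i, M i i = 1 := by
    intro i
    rcases hcases i with h0 | ⟨rfl, hBx⟩
    · rw [hMij, h0]; simp [Module.Basis.repr_self]
    · rw [hMij, hBx, hx, one_smul, map_add]
      have h1 : B.repr x 0 = 1 := by rw [← hBx]; simp [Module.Basis.repr_self]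
      have h2 : B.repr w 0 = 0 := repr_eq_zero_of_ker l x hx w h
      simp [h1, h2]
  simp [hdiag]

end Det

section Main

variable {A : Type*} [AddCommGroup A] [Module.Free ℤ A] [Module.Finite ℤ A]

lemma mem_multiples {N : ℤ} {a : A} : a ∈ multiplesSubgroup A N ↔ ∃ z : A, N • z = a :=
  Iff.rfl

lemma map_multiples (f : A ≃ₗ[ℤ] A) (N : ℤ) :
    AddSubgroup.map f.toLinearMap.toAddMonoidHom (multiplesSubgroup A N) =
      multiplesSubgroup A N := by
  ext a
  simp only [AddSubgroup.mem_map]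
  constructor
  · rintro ⟨y, hy, rfl⟩
    obtain ⟨z, rfl⟩ := mem_multiples.mp hy
    exact mem_multiples.mpr ⟨f z, by simp⟩
  · intro ha
    obtain ⟨z, rfl⟩ := mem_multiples.mp ha
    exact ⟨N • f.symm z, mem_multiples.mpr ⟨f.symm z, rfl⟩, by simp⟩

lemma elem_conj (m : ℕ) (f : A ≃ₗ[ℤ] A) {g : A ≃ₗ[ℤ] A}
    (hg : g ∈ ElemSubgroup (multiplesSubgroup A (m : ℤ))) :
    f * g * f⁻¹ ∈ ElemSubgroup (multiplesSubgroup A (m : ℤ)) := by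
  rw [ElemSubgroup] at hg ⊢
  induction hg using Subgroup.closure_induction with
  | mem g hgmem =>
      obtain ⟨l, c, hs, hc, h0, hv⟩ := hgmem
      apply Subgroup.subset_closure
      refine ⟨l ∘ₗ f.symm.toLinearMap, f c, ?_, ?_, by simp [h0], ?_⟩
      · exact hs.comp f.symm.surjective
      · obtain ⟨z, rfl⟩ := mem_multiples.mp hc
        exact mem_multiples.mpr ⟨f z, by simp⟩
      · intro v
        show f (g (f⁻¹ v)) = _
        simp [hv]
  | one => simpa using Subgroup.one_mem _
  | mul x y _ _ hx hy =>
      have : f * (x * y) * f⁻¹ = (f * x * f⁻¹) * (f * y * f⁻¹) := by group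
      rw [this]; exact mul_mem hx hy
  | inv x _ hx =>
      have : f * x⁻¹ * f⁻¹ = (f * x * f⁻¹)⁻¹ := by group
      rw [this]; exact inv_mem hx

variable (m n : ℕ) (b : Module.Basis (Fin n) ℤ A)

/-- The generating set of `m`-th powers of elementary automorphisms. -/
def stdSet : Set ↥(SLAut A) :=
  {g : ↥(SLAut A) | ∃ i j : Fin n, i ≠ j ∧ ∃ E : ↥(SLAut A),
    (((E : A ≃ₗ[ℤ] A) (b j) = b j + b i) ∧
      ∀ l : Fin n, l ≠ j → (E : A ≃ₗ[ℤ] A) (b l) = b l) ∧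
    g = E ^ m}

/-- The normal closure appearing in the theorem. -/
noncomputable def bigN : Subgroup ↥(SLAut A) :=
  Subgroup.normalClosure ((Subgroup.closure (stdSet m n b) : Subgroup ↥(SLAut A)) :
    Set ↥(SLAut A))

lemma coord_ne {ι : Type*} (B : Module.Basis ι ℤ A) {i j : ι} (hij : i ≠ j) :
    B.coord j (B i) = 0 := by
  simp [Module.Basis.coord_apply, Module.Basis.repr_self, Finsupp.single_apply, hij]

/-- The elementary automorphism sending `B j ↦ B j + B i`. -/
noncomputable def eps {ι : Type*} (B : Module.Basis ι ℤ A) (i j : ι) (hij : i ≠ j) : A ≃ₗ[ℤ] A :=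
  trv (B.coord j) (B i) (coord_ne B hij)

lemma eps_det {ι : Type*} (B : Module.Basis ι ℤ A) (i j : ι) (hij : i ≠ j) :
    LinearEquiv.det (eps B i j hij) = 1 :=
  trv_det _ _ _ (B j) (by simp [Module.Basis.coord_apply, Module.Basis.repr_self])

lemma eps_conj {ι : Type*} [Fintype ι] [DecidableEq ι] (B : Module.Basis ι ℤ A) (e : ι ≃ Fin n)
    (i j : ι) (hij : i ≠ j) :
    (B.equiv b e : A ≃ₗ[ℤ] A) * eps B i j hij * (B.equiv b e : A ≃ₗ[ℤ] A)⁻¹ =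
      eps b (e i) (e j) (fun hh => hij (e.injective hh)) := by
  rw [eps, eps, trv_conj]
  refine trv_congr _ _ _ _ _ ?_ (Module.Basis.equiv_apply B i b e)
  apply b.ext
  intro p
  have h1 : ((B.equiv b e : A ≃ₗ[ℤ] A)⁻¹) (b p) = B (e.symm p) := by
    rw [linearEquiv_inv_apply, Module.Basis.equiv_symm, Module.Basis.equiv_apply]
  rw [LinearMap.comp_apply]
  show B.coord j (((B.equiv b e : A ≃ₗ[ℤ] A)⁻¹) (b p)) = b.coord (e j) (b p)
  rw [h1]
  by_cases hp : p = e j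
  · subst hp
    simp [Module.Basis.coord_apply, Module.Basis.repr_self]
  · have : e.symm p ≠ j := fun hh => hp (by rw [← hh, Equiv.apply_symm_apply])
    rw [coord_ne B this, coord_ne b (Ne.symm (Ne.symm hp))]

lemma pow_mem_of_det_one {ι : Type*} [Fintype ι] [DecidableEq ι] (B : Module.Basis ι ℤ A)
    (e : ι ≃ Fin n) (i j : ι) (hij : i ≠ j)
    (hdet : LinearEquiv.det (B.equiv b e : A ≃ₗ[ℤ] A) = 1) :
    (eps B i j hij) ^ m ∈ Subgroup.map (SLAut A).subtype (bigN m n b) := by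
  set T : A ≃ₗ[ℤ] A := (B.equiv b e : A ≃ₗ[ℤ] A) with hT
  have hTmem : T ∈ SLAut A := hdet
  have he : (e i) ≠ (e j) := fun hh => hij (e.injective hh)
  have hEmem : eps b (e i) (e j) he ∈ SLAut A := eps_det b (e i) (e j) he
  set Tsl : ↥(SLAut A) := ⟨T, hTmem⟩ with hTsl
  set Esl : ↥(SLAut A) := ⟨eps b (e i) (e j) he, hEmem⟩ with hEsl
  have hE : Esl ^ m ∈ bigN m n b := by
    apply Subgroup.subset_normalClosure
    apply Subgroup.subset_closure
    refine ⟨e i, e j, he, Esl, ⟨?_, ?_⟩, rfl⟩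
    · show eps b (e i) (e j) he (b (e j)) = _
      rw [eps, trv_apply]
      simp [Module.Basis.coord_apply, Module.Basis.repr_self]
    · intro l hl
      show eps b (e i) (e j) he (b l) = _
      rw [eps, trv_apply, coord_ne b hl]
      simp
  have hconj : Tsl⁻¹ * Esl ^ m * Tsl ∈ bigN m n b := by
    have := (Subgroup.normalClosure_normal).conj_mem _ hE (Tsl⁻¹)
    rw [inv_inv] at this
    exact this
  refine ⟨Tsl⁻¹ * Esl ^ m * Tsl, hconj, ?_⟩
  have hval : ((Tsl⁻¹ * Esl ^ m * Tsl : ↥(SLAut A)) : A ≃ₗ[ℤ] A)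
      = T⁻¹ * (eps b (e i) (e j) he) ^ m * T := rfl
  show ((Tsl⁻¹ * Esl ^ m * Tsl : ↥(SLAut A)) : A ≃ₗ[ℤ] A) = (eps B i j hij) ^ m
  rw [hval]
  have heq : eps B i j hij = T⁻¹ * (eps b (e i) (e j) he) * T := by
    rw [← eps_conj n b B e i j hij]
    rw [hT]
    group
  rw [heq]
  have : T⁻¹ * (eps b (e i) (e j) he) * T
      = T⁻¹ * (eps b (e i) (e j) he) * (T⁻¹)⁻¹ := by rw [inv_inv]
  rw [this, conj_pow, inv_inv]

lemma eps_pow_mem {ι : Type*} [Fintype ι] [DecidableEq ι] (B : Module.Basis ι ℤ A)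
    (i j : ι) (hij : i ≠ j) :
    (eps B i j hij) ^ m ∈ Subgroup.map (SLAut A).subtype (bigN m n b) := by
  let e : ι ≃ Fin n := B.indexEquiv b
  rcases Int.units_eq_one_or (LinearEquiv.det (B.equiv b e : A ≃ₗ[ℤ] A)) with hdet | hdet
  · exact pow_mem_of_det_one m n b B e i j hij hdet
  · set u : ι → ℤˣ := fun q => if q = i then -1 else 1 with hu
    set B' := B.unitsSMul u with hB'
    have hB'q : ∀ q, B' q = ((u q : ℤˣ) : ℤ) • B q := by
      intro q; rw [hB', Module.Basis.unitsSMul_apply, Units.smul_def]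
    have hB'i : B' i = -B i := by
      rw [hB'q]; simp [hu]
    have hcoord : B'.coord j = B.coord j := by
      apply B'.ext
      intro q
      rw [Module.Basis.coord_apply, Module.Basis.repr_self, hB'q, map_smul]
      by_cases hq : q = j
      · subst hq
        have huq : u q = 1 := by rw [hu]; simp [Ne.symm hij]
        rw [huq]
        simp [Module.Basis.coord_apply, Module.Basis.repr_self]
      · rw [coord_ne B hq]
        simp [Finsupp.single_apply, hq]
    have hflip : eps B' i j hij = (eps B i j hij)⁻¹ := by
      rw [eps, eps, trv_inv]
      exact trv_congr _ _ _ _ _ hcoord hB'i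
    have hD : LinearEquiv.det (B.equiv B' (Equiv.refl ι) : A ≃ₗ[ℤ] A) = -1 := by
      apply Units.ext
      rw [LinearEquiv.coe_det, ← LinearMap.det_toMatrix B]
      have hmat : LinearMap.toMatrix B B (B.equiv B' (Equiv.refl ι) : A ≃ₗ[ℤ] A).toLinearMap
          = Matrix.diagonal (fun q => ((u q : ℤˣ) : ℤ)) := by
        ext p q
        rw [LinearMap.toMatrix_apply]
        show B.repr ((B.equiv B' (Equiv.refl ι)) (B q)) p = _
        rw [Module.Basis.equiv_apply, Equiv.refl_apply, hB'q, map_smul]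
        by_cases hpq : p = q
        · subst hpq
          simp [Module.Basis.repr_self, Matrix.diagonal_apply]
        · simp [Module.Basis.repr_self, Matrix.diagonal_apply, Finsupp.single_apply,
            Ne.symm hpq, hpq]
      rw [hmat, Matrix.det_diagonal]
      have hval : ∀ q, ((u q : ℤˣ) : ℤ) = if q = i then -1 else 1 := by
        intro q; by_cases hq : q = i <;> simp [hu, hq]
      rw [Finset.prod_congr rfl (fun q _ => hval q), Finset.prod_ite_eq']
      simp
    have hTT : (B.equiv b e : A ≃ₗ[ℤ] A)
        = (B'.equiv b e : A ≃ₗ[ℤ] A) * (B.equiv B' (Equiv.refl ι) : A ≃ₗ[ℤ] A) := by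
      apply LinearEquiv.toLinearMap_injective
      apply B.ext
      intro q
      show (B.equiv b e) (B q) = (B'.equiv b e) ((B.equiv B' (Equiv.refl ι)) (B q))
      rw [Module.Basis.equiv_apply, Module.Basis.equiv_apply, Equiv.refl_apply, Module.Basis.equiv_apply]
    have hdet' : LinearEquiv.det (B'.equiv b e : A ≃ₗ[ℤ] A) = 1 := by
      rcases Int.units_eq_one_or (LinearEquiv.det (B'.equiv b e : A ≃ₗ[ℤ] A)) with h1 | h1
      · exact h1
      · exfalso
        rw [hTT, map_mul, h1, hD] at hdet
        norm_num at hdet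
    have hmem := pow_mem_of_det_one m n b B' e i j hij hdet'
    rw [hflip, inv_pow] at hmem
    exact (inv_mem_iff).mp hmem

lemma localElem_mem (hm0 : m ≠ 0) (g : A ≃ₗ[ℤ] A)
    (hg : IsLocalElementary (multiplesSubgroup A (m : ℤ)) g) :
    g ∈ Subgroup.map (SLAut A).subtype (bigN m n b) := by
  obtain ⟨l, c, hs, hc, h0, hv⟩ := hg
  have hg' : g = trv l c h0 := by ext v; rw [trv_apply]; exact hv v
  obtain ⟨x, hx⟩ := hs 1
  obtain ⟨c₀, hc₀⟩ := mem_multiples.mp hc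
  have hlc₀ : l c₀ = 0 := by
    have h1 : (m : ℤ) * l c₀ = 0 := by rw [← smul_eq_mul, ← map_zsmul, hc₀, h0]
    rcases mul_eq_zero.mp h1 with h2 | h2
    · exact absurd h2 (by exact_mod_cast hm0)
    · exact h2
  set B := adaptedBasis l x hx with hB
  have hB0 : B 0 = x := adaptedBasis_zero l x hx
  have hBs : ∀ k, l (B (Fin.succ k)) = 0 := adaptedBasis_succ l x hx
  have hlB : l = B.coord 0 := by
    apply B.ext
    intro q
    rcases Fin.eq_zero_or_eq_succ q with rfl | ⟨k, rfl⟩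
    · rw [hB0, hx, Module.Basis.coord_apply, ← hB0, Module.Basis.repr_self]
      simp
    · rw [hBs k, coord_ne B (Fin.succ_ne_zero k)]
  obtain ⟨a, ha⟩ := exists_sum_succ l x hx c₀ hlc₀
  have hc₀' : (m : ℤ) • c₀ = c := hc₀
  have hcsum : c = ∑ k, ((m : ℤ) * a k) • B (Fin.succ k) := by
    rw [← hc₀', ha, Finset.smul_sum]
    exact Finset.sum_congr rfl fun k _ => by rw [smul_smul]
  rw [hg']
  have hrw : trv l c h0
      = trv l (∑ k, ((m : ℤ) * a k) • B (Fin.succ k)) (by rw [← hcsum]; exact h0) :=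
    trv_congr _ _ _ _ _ rfl hcsum
  rw [hrw]
  refine trv_sum_mem _ l _ (fun k => by rw [map_smul, hBs k, smul_zero]) Finset.univ ?_ _
  intro k _ hk
  have e1 : trv l (((m : ℤ) * a k) • B (Fin.succ k)) hk
      = trv l (B (Fin.succ k)) (hBs k) ^ ((m : ℤ) * a k) := (trv_zpow _ _ _ _).symm
  rw [e1, zpow_mul, zpow_natCast]
  have e2 : trv l (B (Fin.succ k)) (hBs k) = eps B (Fin.succ k) 0 (Fin.succ_ne_zero k) := by
    rw [eps]; exact trv_congr _ _ _ _ _ hlB rfl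
  rw [e2]
  exact Subgroup.zpow_mem _ (eps_pow_mem m n b B (Fin.succ k) 0 (Fin.succ_ne_zero k)) (a k)

end Main

/-- For `A₀ = m·A` with `m ≥ 2`:
(1) every determinant-one automorphism of `A` maps `A₀` onto itself, i.e.
`SL_{A₀}(A) = SL(A)`; and
(2) for any basis `e₁,…,e_n` of `A`, the group `Elem^{A₀}(A)` equals the normal closure
in `SL(A)` of the subgroup generated by the `m`-th powers of the basic elementary
automorphisms `E_{ij}` (for `i ≠ j`), where `E_{ij}` sends `e_j ↦ e_j + e_i` and fixes
`e_l` for `l ≠ j`. -/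
theorem elem_eq_normalClosure_of_powers
    (A : Type*) [AddCommGroup A] [Module.Free ℤ A] [Module.Finite ℤ A]
    (m : ℕ) (hm : 2 ≤ m) :
    (∀ f : A ≃ₗ[ℤ] A, f ∈ SLAut A →
        AddSubgroup.map f.toLinearMap.toAddMonoidHom (multiplesSubgroup A (m : ℤ)) =
          multiplesSubgroup A (m : ℤ)) ∧
    (∀ (n : ℕ) (b : Module.Basis (Fin n) ℤ A),
        (ElemSubgroup (multiplesSubgroup A (m : ℤ))).subgroupOf (SLAut A) =
          Subgroup.normalClosure
            ((Subgroup.closure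
              {g : ↥(SLAut A) | ∃ i j : Fin n, i ≠ j ∧ ∃ E : ↥(SLAut A),
                (((E : A ≃ₗ[ℤ] A) (b j) = b j + b i) ∧
                  ∀ l : Fin n, l ≠ j → (E : A ≃ₗ[ℤ] A) (b l) = b l) ∧
                g = E ^ m} : Subgroup ↥(SLAut A)) : Set ↥(SLAut A))) := by
  constructor
  · intro f _
    exact map_multiples f (m : ℤ)
  · intro n b
    have hmain : (ElemSubgroup (multiplesSubgroup A (m : ℤ))).subgroupOf (SLAut A)
        = bigN m n b := by
      apply le_antisymm
      · intro x hx
        rw [Subgroup.mem_subgroupOf] at hx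
        have hle : ElemSubgroup (multiplesSubgroup A (m : ℤ)) ≤
            Subgroup.map (SLAut A).subtype (bigN m n b) := by
          rw [ElemSubgroup]
          apply (Subgroup.closure_le _).mpr
          intro g hg
          exact localElem_mem m n b (by omega) g hg
        obtain ⟨y, hy, hyx⟩ := hle hx
        have hyx' : y = x := Subtype.ext hyx
        rwa [← hyx']
      · have hnormal :
            ((ElemSubgroup (multiplesSubgroup A (m : ℤ))).subgroupOf (SLAut A)).Normal := by
          constructor
          intro g hg x
          rw [Subgroup.mem_subgroupOf] at hg ⊢
          exact elem_conj m (x : A ≃ₗ[ℤ] A) hg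
        rw [bigN]
        apply Subgroup.normalClosure_le_normal
        have hcl : Subgroup.closure (stdSet m n b) ≤
            (ElemSubgroup (multiplesSubgroup A (m : ℤ))).subgroupOf (SLAut A) := by
          apply (Subgroup.closure_le _).mpr
          rintro g ⟨i, j, hij, E, ⟨hEj, hEl⟩, rfl⟩
          rw [SetLike.mem_coe, Subgroup.mem_subgroupOf]
          have hE : (E : A ≃ₗ[ℤ] A) = eps b i j hij := by
            apply LinearEquiv.toLinearMap_injective
            apply b.ext
            intro q
            by_cases hq : q = j
            · subst hq
              show (E : A ≃ₗ[ℤ] A) (b q) = eps b i q hij (b q)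
              rw [hEj, eps, trv_apply]
              simp [Module.Basis.coord_apply, Module.Basis.repr_self]
            · show (E : A ≃ₗ[ℤ] A) (b q) = eps b i j hij (b q)
              rw [hEl q hq, eps, trv_apply, coord_ne b hq]
              simp
          have hcoe : ((E ^ m : ↥(SLAut A)) : A ≃ₗ[ℤ] A) = eps b i j hij ^ m := by
            rw [← hE]; rfl
          rw [ElemSubgroup, hcoe, eps, trv_pow]
          apply Subgroup.subset_closure
          refine ⟨b.coord j, m • b i, ?_, ?_, ?_, fun v => by rw [trv_apply]⟩
          · intro t
            refine ⟨t • b j, ?_⟩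
            rw [map_smul, Module.Basis.coord_apply, Module.Basis.repr_self]
            simp
          · exact mem_multiples.mpr ⟨b i, natCast_zsmul (b i) m⟩
          · rw [map_nsmul, coord_ne b hij, smul_zero]
        intro g hg
        exact hcl hg
    exact hmain
end

section
/- For every integer m ≥ 8000, putting N := 24m, the normal closure in SL(2,ℤ) of the subgroup generated by the two elementary matrices [[1,N],[0,1]] and [[1,0],[N,1]] has infinite index in SL(2,ℤ). -/
noncomputable section PP

namespace SLPP

open Matrix ModularGroup UpperHalfPlane Monoid Pointwise

local notation "SL2Z" => Matrix.SpecialLinearGroup (Fin 2) ℤ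




/-- A primitive cube root of unity. -/
def ω : ℂ := ⟨-1/2, Real.sqrt 3 / 2⟩

lemma ω_prop : ω ^ 2 + ω + 1 = 0 := by
  have h3 : Real.sqrt 3 ^ 2 = 3 := Real.sq_sqrt (by norm_num)
  rw [Complex.ext_iff]
  constructor <;>
    simp [ω, pow_two, Complex.add_re, Complex.add_im, Complex.mul_re, Complex.mul_im] <;>
    nlinarith [h3]

lemma ω_ne_one : ω ≠ 1 := by
  intro h
  have := congrArg Complex.re h
  simp [ω] at this
  norm_num at this

lemma ω_cube : ω ^ 3 = 1 := by
  have h := ω_prop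
  linear_combination (ω - 1) * h

/-- The target group: units of 2×2 complex matrices. -/
abbrev GT := (Matrix (Fin 2) (Fin 2) ℂ)ˣ

/-- affine matrix -/
def aff (u a : ℂ) : Matrix (Fin 2) (Fin 2) ℂ := !![u, a; 0, 1]

lemma aff_mul (u a v b : ℂ) : aff u a * aff v b = aff (u * v) (u * b + a) := by
  simp [aff, Matrix.mul_fin_two]

lemma aff_one : aff 1 0 = 1 := by
  simp [aff, Matrix.one_fin_two]

lemma aff_eq {u a v b : ℂ} (h1 : u = v) (h2 : a = b) : aff u a = aff v b := by
  rw [h1, h2]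

lemma aff_inj {u a v b : ℂ} (h : aff u a = aff v b) : u = v ∧ a = b := by
  constructor
  · have := congrFun (congrFun h 0) 0; simpa [aff] using this
  · have := congrFun (congrFun h 0) 1; simpa [aff] using this

def affU (u a : ℂ) (hu : u ≠ 0) : GT :=
  ⟨aff u a, aff u⁻¹ (-(u⁻¹ * a)), by
      rw [aff_mul, mul_inv_cancel₀ hu, show u * -(u⁻¹ * a) + a = 0 by field_simp; ring, aff_one], by
      rw [aff_mul, inv_mul_cancel₀ hu, show u⁻¹ * a + -(u⁻¹ * a) = 0 by ring, aff_one]⟩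

lemma ω_ne_zero : ω ≠ 0 := by
  intro h
  have := ω_cube
  rw [h] at this
  simp at this

/-- σ : order-2 rotation -/
def σ : GT := affU (-1) 1 (by norm_num)

/-- β : order-3 rotation about 0 -/
def β : GT := affU ω 0 ω_ne_zero

lemma σ_val : σ.val = aff (-1) 1 := rfl
lemma β_val : β.val = aff ω 0 := rfl
lemma σ_sq : σ ^ 2 = 1 := by
  apply Units.ext
  rw [pow_two, Units.val_mul, σ_val, aff_mul]
  norm_num [aff_one]

lemma β_cube : β ^ 3 = 1 := by
  apply Units.ext
  rw [pow_succ, pow_two, Units.val_mul, Units.val_mul, β_val, aff_mul, aff_mul]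
  rw [show ω * ω * ω = ω ^ 3 by ring, ω_cube]
  norm_num [aff_one]

lemma βinv_eq : β⁻¹ = β ^ 2 :=
  inv_eq_of_mul_eq_one_left (by rw [← pow_succ]; exact β_cube)

/-- the image of T -/
def τ : GT := β⁻¹ * σ⁻¹

lemma τ_pow_six : τ ^ 6 = 1 := by
  have h3 : ((σ * β) ^ 3).val = aff (-1) (-2 * ω) := by
    rw [pow_succ, pow_two]
    simp only [Units.val_mul, σ_val, β_val]
    simp only [aff_mul]
    apply aff_eq
    · linear_combination -ω_cube
    · linear_combination ω_prop
  have h : (σ * β) ^ 6 = 1 := by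
    apply Units.ext
    rw [show (6:ℕ) = 3 * 2 by norm_num, pow_mul, pow_two, Units.val_mul, h3, aff_mul]
    norm_num [aff_one]
  have hτ : τ = (σ * β)⁻¹ := by rw [τ, _root_.mul_inv_rev]
  rw [hτ, inv_pow, h, inv_one]

lemma translation_pow : ∀ n : ℕ, ((β * σ * β⁻¹ * σ) ^ n).val = aff 1 (n * (ω - 1)) := by
  have hval : (β * σ * β⁻¹ * σ).val = aff 1 (ω - 1) := by
    rw [βinv_eq, pow_two]
    simp only [Units.val_mul, β_val, σ_val, aff_mul]
    apply aff_eq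
    · linear_combination ω_cube
    · linear_combination -ω_cube
  intro n
  induction n with
  | zero => simp [aff_one]
  | succ n ih =>
    rw [pow_succ, Units.val_mul, ih, hval, aff_mul]
    apply aff_eq <;> push_cast <;> ring



open Matrix ModularGroup


lemma mem_closure_ST (g : SL2Z) : g ∈ Subgroup.closure ({S, T} : Set SL2Z) := by
  have hS : S ∈ Subgroup.closure ({S, T} : Set SL2Z) :=
    Subgroup.subset_closure (by simp)
  have hT : T ∈ Subgroup.closure ({S, T} : Set SL2Z) :=
    Subgroup.subset_closure (by simp)
  suffices h : ∀ n : ℕ, ∀ g : SL2Z, (g.1 1 0).natAbs = n →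
      g ∈ Subgroup.closure ({S, T} : Set SL2Z) from h _ g rfl
  intro n
  induction n using Nat.strong_induction_on with
  | _ n ih =>
    intro g hg
    by_cases hc : g.1 1 0 = 0
    · -- lower-left entry is zero
      have hdet : g.1 0 0 * g.1 1 1 - g.1 0 1 * g.1 1 0 = 1 := by
        rw [← Matrix.det_fin_two]; exact g.2
      rw [hc, mul_zero, sub_zero] at hdet
      rcases Int.mul_eq_one_iff_eq_one_or_neg_one.mp hdet with ⟨h1, h2⟩ | ⟨h1, h2⟩
      · have heq : g = T ^ (g.1 0 1) := by
          apply Subtype.ext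
          rw [ModularGroup.coe_T_zpow]
          conv_lhs => rw [Matrix.eta_fin_two g.1]
          rw [h1, h2, hc]
        rw [heq]
        exact Subgroup.zpow_mem _ hT _
      · have heq : g = S ^ 2 * T ^ (-(g.1 0 1)) := by
          apply Subtype.ext
          have hr : ((S ^ 2 * T ^ (-(g.1 0 1)) : SL2Z) : Matrix (Fin 2) (Fin 2) ℤ)
              = !![(-1 : ℤ), g.1 0 1; 0, -1] := by
            rw [pow_two]
            simp only [Matrix.SpecialLinearGroup.coe_mul, ModularGroup.coe_S,
              ModularGroup.coe_T_zpow]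
            rw [Matrix.mul_fin_two, Matrix.mul_fin_two]
            ext i j
            fin_cases i <;> fin_cases j <;> simp <;> ring
          rw [hr]
          conv_lhs => rw [Matrix.eta_fin_two g.1]
          rw [h1, h2, hc]
        rw [heq]
        exact Subgroup.mul_mem _ (Subgroup.pow_mem _ hS 2) (Subgroup.zpow_mem _ hT _)
    · -- lower-left entry is nonzero
      set a := g.1 0 0 with ha
      set c := g.1 1 0 with hcdef
      set q := a / c with hq
      set g' := S * T ^ (-q) * g with hg'
      have h10 : g'.1 1 0 = a % c := by
        have hcoe : g'.1 = S.1 * ((T ^ (-q)).1 * g.1) := by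
          rw [hg']; simp [mul_assoc]
        rw [hcoe, ModularGroup.coe_S, ModularGroup.coe_T_zpow, Matrix.eta_fin_two g.1,
          Matrix.mul_fin_two, Matrix.mul_fin_two]
        simp only [Matrix.cons_val', Matrix.cons_val_zero, Matrix.cons_val_one,
          Matrix.head_cons, Matrix.empty_val', Matrix.cons_val_fin_one, Matrix.of_apply,
          Matrix.vecHead, Matrix.vecTail]
        rw [Int.emod_def]
        ring
      have hlt : (g'.1 1 0).natAbs < n := by
        rw [h10, ← hg]
        have h1 : 0 ≤ a % c := Int.emod_nonneg a hc
        have habs : a % |c| = a % c := by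
          rcases abs_choice c with h | h
          · rw [h]
          · rw [h, Int.emod_neg]
        have h2 : a % c < |c| := habs ▸ Int.emod_lt_of_pos a (abs_pos.mpr hc)
        rw [Int.abs_eq_natAbs] at h2
        omega
      have hg'mem := ih _ hlt g' rfl
      have heq : g = T ^ q * S⁻¹ * g' := by rw [hg']; group
      rw [heq]
      exact Subgroup.mul_mem _ (Subgroup.mul_mem _ (Subgroup.zpow_mem _ hT q)
        (Subgroup.inv_mem _ hS)) hg'mem

lemma closure_ST_eq_top : Subgroup.closure ({S, T} : Set SL2Z) = ⊤ :=
  top_unique fun g _ => mem_closure_ST g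



open Matrix ModularGroup UpperHalfPlane Monoid Pointwise


/-! ### basic matrices -/

def B : SL2Z := ⟨!![0, 1; -1, 1], by norm_num [Matrix.det_fin_two_of]⟩

lemma B_eq : B = (T * S)⁻¹ := by
  symm
  rw [inv_eq_iff_mul_eq_one]
  apply Subtype.ext
  show (T.1 * S.1) * B.1 = 1
  rw [ModularGroup.coe_T, ModularGroup.coe_S]
  show (!![1, 1; 0, 1] * !![0, -1; 1, 0]) * !![0, 1; -1, 1] = 1
  rw [Matrix.mul_fin_two, Matrix.mul_fin_two, Matrix.one_fin_two]
  norm_num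

lemma T_eq : T = B⁻¹ * S⁻¹ := by
  rw [B_eq, inv_inv]
  group

lemma S_sq : S ^ 2 = (-1 : SL2Z) := by
  apply Subtype.ext
  rw [pow_two, Matrix.SpecialLinearGroup.coe_mul, ModularGroup.coe_S, Matrix.SpecialLinearGroup.coe_neg,
    Matrix.SpecialLinearGroup.coe_one, Matrix.mul_fin_two, Matrix.one_fin_two]
  norm_num

lemma B_cube : B ^ 3 = (-1 : SL2Z) := by
  apply Subtype.ext
  rw [pow_succ, pow_two, Matrix.SpecialLinearGroup.coe_mul, Matrix.SpecialLinearGroup.coe_mul]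
  show !![0, 1; -1, 1] * !![0, 1; -1, 1] * !![0, 1; -1, 1] = _
  rw [Matrix.SpecialLinearGroup.coe_neg, Matrix.SpecialLinearGroup.coe_one,
    Matrix.mul_fin_two, Matrix.mul_fin_two, Matrix.one_fin_two]
  norm_num

/-! ### the action on ℍ -/

def pi : SL2Z →* Equiv.Perm ℍ := MulAction.toPermHom SL2Z ℍ

lemma pi_apply (g : SL2Z) (z : ℍ) : pi g z = g • z := rfl

lemma neg_one_smul_H (z : ℍ) : ((-1 : SL2Z)) • z = z := by
  have h := UpperHalfPlane.specialLinearGroup_apply (-1 : SL2Z) z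
  apply UpperHalfPlane.ext
  rw [h]
  have h00 : ((-1 : SL2Z) : Matrix (Fin 2) (Fin 2) ℤ) 0 0 = -1 := by
    rw [Matrix.SpecialLinearGroup.coe_neg, Matrix.SpecialLinearGroup.coe_one]; simp
  have h01 : ((-1 : SL2Z) : Matrix (Fin 2) (Fin 2) ℤ) 0 1 = 0 := by
    rw [Matrix.SpecialLinearGroup.coe_neg, Matrix.SpecialLinearGroup.coe_one]; simp
  have h10 : ((-1 : SL2Z) : Matrix (Fin 2) (Fin 2) ℤ) 1 0 = 0 := by
    rw [Matrix.SpecialLinearGroup.coe_neg, Matrix.SpecialLinearGroup.coe_one]; simp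
  have h11 : ((-1 : SL2Z) : Matrix (Fin 2) (Fin 2) ℤ) 1 1 = -1 := by
    rw [Matrix.SpecialLinearGroup.coe_neg, Matrix.SpecialLinearGroup.coe_one]; simp
  rw [UpperHalfPlane.coe_mk]
  rw [h00, h01, h10, h11]
  push_cast
  have hz : (z : ℂ) ≠ 0 := UpperHalfPlane.ne_zero z
  field_simp
  ring

lemma pi_neg_one : pi (-1 : SL2Z) = 1 := by
  apply Equiv.ext
  intro z
  rw [pi_apply, neg_one_smul_H]
  rfl

def a' : Equiv.Perm ℍ := pi S
def b' : Equiv.Perm ℍ := pi B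

lemma a'_sq : a' ^ 2 = 1 := by
  rw [a', ← map_pow, S_sq, pi_neg_one]

lemma b'_cube : b' ^ 3 = 1 := by
  rw [b', ← map_pow, B_cube, pi_neg_one]

/-! ### real part computations -/

lemma S_smul_re {z : ℍ} (hz : 0 < z.re) : (S • z).re < 0 := by
  rw [UpperHalfPlane.modular_S_smul]
  show ((-(z : ℂ))⁻¹).re < 0
  rw [Complex.inv_re]
  have hz0 : (z : ℂ) ≠ 0 := UpperHalfPlane.ne_zero z
  have : 0 < Complex.normSq (-(z : ℂ)) := by
    refine Complex.normSq_pos.mpr ?_; simpa using hz0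
  have hre : (-(z : ℂ)).re = -z.re := by simp [UpperHalfPlane.coe_re]
  rw [hre]
  apply div_neg_of_neg_of_pos (by linarith) this

lemma B_smul_coe (z : ℍ) : ((B • z : ℍ) : ℂ) = 1 / (1 - (z : ℂ)) := by
  rw [UpperHalfPlane.specialLinearGroup_apply]
  rw [UpperHalfPlane.coe_mk]
  have h00 : B.1 0 0 = 0 := rfl
  have h01 : B.1 0 1 = 1 := rfl
  have h10 : B.1 1 0 = -1 := rfl
  have h11 : B.1 1 1 = 1 := rfl
  rw [h00, h01, h10, h11]
  push_cast
  ring_nf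

lemma BB_smul_coe (z : ℍ) : (((B * B) • z : ℍ) : ℂ) = ((z : ℂ) - 1) / z := by
  have h : (B * B).1 = !![(-1 : ℤ), 1; -1, 0] := by
    show B.1 * B.1 = _
    show !![0, 1; -1, 1] * !![0, 1; -1, 1] = _
    rw [Matrix.mul_fin_two]; norm_num
  rw [UpperHalfPlane.specialLinearGroup_apply, UpperHalfPlane.coe_mk]
  have h00 : (B * B).1 0 0 = -1 := by rw [h]; rfl
  have h01 : (B * B).1 0 1 = 1 := by rw [h]; rfl
  have h10 : (B * B).1 1 0 = -1 := by rw [h]; rfl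
  have h11 : (B * B).1 1 1 = 0 := by rw [h]; rfl
  rw [h00, h01, h10, h11]
  have hz0 : (z : ℂ) ≠ 0 := UpperHalfPlane.ne_zero z
  push_cast
  rw [div_eq_div_iff]
  · ring
  · intro hc
    apply hz0
    have : (z : ℂ) = 0 := by linear_combination -hc
    exact this
  · exact hz0

lemma B_smul_re {z : ℍ} (hz : z.re < 0) : 0 < (B • z).re := by
  have hcoe := B_smul_coe z
  have : (B • z).re = ((1 : ℂ) / (1 - (z : ℂ))).re := by
    rw [← UpperHalfPlane.coe_re, hcoe]
  rw [this, one_div, Complex.inv_re]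
  apply div_pos
  · simp only [Complex.sub_re, Complex.one_re, UpperHalfPlane.coe_re]
    linarith
  · rw [Complex.normSq_pos]
    intro hc
    have : (1 - (z : ℂ)).im = 0 := by rw [hc]; rfl
    simp only [Complex.sub_im, Complex.one_im, zero_sub, neg_eq_zero] at this
    exact UpperHalfPlane.im_ne_zero z (by simpa [UpperHalfPlane.coe_im] using this)

lemma BB_smul_re {z : ℍ} (hz : z.re < 0) : 0 < ((B * B) • z).re := by
  have hcoe := BB_smul_coe z
  have hz0 : (z : ℂ) ≠ 0 := UpperHalfPlane.ne_zero z
  have : ((B * B) • z).re = (((z : ℂ) - 1) / (z : ℂ)).re := by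
    rw [← UpperHalfPlane.coe_re, hcoe]
  rw [this, Complex.div_re]
  have hn : 0 < Complex.normSq (z : ℂ) := Complex.normSq_pos.mpr hz0
  have h1 : ((z : ℂ) - 1).re * (z : ℂ).re = (z.re - 1) * z.re := by
    simp [UpperHalfPlane.coe_re]
  have h2 : ((z : ℂ) - 1).im * (z : ℂ).im = z.im * z.im := by
    simp [UpperHalfPlane.coe_im]
  rw [h1, h2, ← add_div]
  have him : 0 < z.im := z.im_pos
  have hpos : 0 < (z.re - 1) * z.re + z.im * z.im := by nlinarith
  exact div_pos hpos hn

/-! ### the ZMod hom helper -/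

/-- The homomorphism `Multiplicative (ZMod n) →* K` sending `1` to a fixed element `x`
with `x ^ n = 1`. -/
noncomputable def zmodMulHom {K : Type*} [Group K] (n : ℕ) (x : K) (hx : x ^ n = 1) :
    Multiplicative (ZMod n) →* K :=
  AddMonoidHom.toMultiplicativeLeft
    (ZMod.lift n ⟨zmultiplesHom (Additive K) (Additive.ofMul x), by
      simp only [zmultiplesHom_apply]
      rw [show ((n : ℤ) • Additive.ofMul x) = Additive.ofMul (x ^ (n : ℤ)) from rfl]
      rw [zpow_natCast, hx]
      rfl⟩)

lemma zmodMulHom_intCast {K : Type*} [Group K] (n : ℕ) (x : K) (hx : x ^ n = 1) (k : ℤ) :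
    zmodMulHom n x hx (Multiplicative.ofAdd ((k : ZMod n))) = x ^ k := by
  simp only [zmodMulHom, AddMonoidHom.toMultiplicativeLeft, Equiv.coe_fn_mk,
    MonoidHom.coe_mk, OneHom.coe_mk]
  show Additive.toMul (ZMod.lift n _ (k : ZMod n)) = x ^ k
  rw [ZMod.lift_coe]
  rfl

/-! ### the ping-pong setup -/

abbrev Hfam : Bool → Type := fun b => Multiplicative (ZMod (cond b 2 3))

noncomputable def ffam : ∀ b, Hfam b →* Equiv.Perm ℍ := fun b =>
  match b with
  | true => zmodMulHom 2 a' a'_sq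
  | false => zmodMulHom 3 b' b'_cube

def XX : Bool → Set ℍ := fun b => if b then {z : ℍ | z.re < 0} else {z : ℍ | 0 < z.re}

lemma zmodMulHom_exists {K : Type*} [Group K] (n : ℕ) [NeZero n] (x : K) (hx : x ^ n = 1)
    (h : Multiplicative (ZMod n)) :
    ∃ k : ℤ, h = Multiplicative.ofAdd ((k : ZMod n)) ∧ zmodMulHom n x hx h = x ^ k := by
  have hv : ((((Multiplicative.toAdd h).val : ℤ)) : ZMod n) = Multiplicative.toAdd h := by
    rw [Int.cast_natCast]
    exact ZMod.natCast_rightInverse (Multiplicative.toAdd h)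
  have hk : h = Multiplicative.ofAdd ((((Multiplicative.toAdd h).val : ℤ) : ZMod n)) := by
    rw [hv]
    rfl
  refine ⟨_, hk, ?_⟩
  conv_lhs => rw [hk]
  exact zmodMulHom_intCast n x hx _

lemma zpow_mod {K : Type*} [Group K] {x : K} {n : ℕ} (hx : x ^ n = 1) (k : ℤ) :
    x ^ k = x ^ (k % (n : ℤ)) := by
  conv_lhs => rw [← Int.emod_add_mul_ediv k (n : ℤ)]
  rw [_root_.zpow_add, _root_.zpow_mul, zpow_natCast, hx, _root_.one_zpow, mul_one]

lemma hXnonempty : ∀ b, (XX b).Nonempty := by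
  intro b
  cases b
  · refine ⟨⟨1 + Complex.I, by simp⟩, ?_⟩
    show (0:ℝ) < (1 + Complex.I : ℂ).re
    norm_num
  · refine ⟨⟨-1 + Complex.I, by simp⟩, ?_⟩
    show (-1 + Complex.I : ℂ).re < 0
    norm_num

lemma hXdisj : Pairwise (Function.onFun Disjoint XX) := by
  have key : ∀ z : ℍ, z ∈ XX true → z ∈ XX false → False := by
    intro z h1 h2
    have h1' : z.re < 0 := h1
    have h2' : 0 < z.re := h2
    linarith
  intro i j hij
  cases i <;> cases j
  · exact absurd rfl hij
  · exact Set.disjoint_left.mpr fun z hz hz' => key z hz' hz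
  · exact Set.disjoint_left.mpr fun z hz hz' => key z hz hz'
  · exact absurd rfl hij

lemma hpp : Pairwise fun i j => ∀ h : Hfam i, h ≠ 1 → ffam i h • XX j ⊆ XX i := by
  intro i j hij
  cases i
  · -- i = false : ZMod 3 factor, j = true
    have hj : j = true := by
      cases j
      · exact absurd rfl hij
      · rfl
    subst hj
    intro h hne
    rintro w ⟨z, hz, rfl⟩
    have hz' : z.re < 0 := hz
    show (zmodMulHom 3 b' b'_cube) h • z ∈ XX false
    obtain ⟨k, hk, hval⟩ := zmodMulHom_exists 3 b' b'_cube h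
    rw [hval, zpow_mod b'_cube k]
    have hk0 : k % 3 ≠ 0 := by
      intro h0
      apply hne
      have : ((k : ZMod 3)) = 0 := by
        rw [ZMod.intCast_zmod_eq_zero_iff_dvd]
        omega
      rw [hk, this]
      rfl
    have hrange : k % 3 = 1 ∨ k % 3 = 2 := by omega
    show (0:ℝ) < (b' ^ (k % 3) • z).re
    rcases hrange with h1 | h1
    · rw [h1, zpow_one, Equiv.Perm.smul_def]
      show 0 < ((pi B) z).re
      rw [pi_apply]
      exact B_smul_re hz'
    · rw [h1, show (2:ℤ) = 1 + 1 by norm_num, _root_.zpow_add, zpow_one, Equiv.Perm.smul_def]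
      show 0 < ((b' * b') z).re
      have hbb : (b' * b') z = (B * B) • z := by
        rw [b', ← _root_.map_mul, pi_apply]
      rw [hbb]
      exact BB_smul_re hz'
  · -- i = true : ZMod 2 factor, j = false
    have hj : j = false := by
      cases j
      · rfl
      · exact absurd rfl hij
    subst hj
    intro h hne
    rintro w ⟨z, hz, rfl⟩
    have hz' : 0 < z.re := hz
    show (zmodMulHom 2 a' a'_sq) h • z ∈ XX true
    obtain ⟨k, hk, hval⟩ := zmodMulHom_exists 2 a' a'_sq h
    rw [hval, zpow_mod a'_sq k]
    have hk0 : k % 2 ≠ 0 := by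
      intro h0
      apply hne
      have : ((k : ZMod 2)) = 0 := by
        rw [ZMod.intCast_zmod_eq_zero_iff_dvd]
        omega
      rw [hk, this]
      rfl
    have h1 : k % 2 = 1 := by omega
    show (a' ^ (k % 2) • z).re < 0
    rw [h1, zpow_one, Equiv.Perm.smul_def]
    show ((pi S) z).re < 0
    rw [pi_apply]
    exact S_smul_re hz'

lemma hcard : 3 ≤ Cardinal.mk Bool ∨ ∃ b, 3 ≤ Cardinal.mk (Hfam b) := by
  right
  refine ⟨false, ?_⟩
  have : Cardinal.mk (Hfam false) = 3 := by
    rw [show Hfam false = Multiplicative (ZMod 3) from rfl]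
    simp [Cardinal.mk_fintype]
  rw [this]

noncomputable def Lf : Monoid.CoprodI Hfam →* Equiv.Perm ℍ := Monoid.CoprodI.lift ffam

lemma Lf_inj : Function.Injective Lf :=
  Monoid.CoprodI.lift_injective_of_ping_pong ffam hcard XX hXnonempty hXdisj hpp

lemma a'_eq_Lf : Lf (Monoid.CoprodI.of (Multiplicative.ofAdd (((1 : ℤ) : ZMod 2)) : Hfam true))
    = a' := by
  rw [Lf, Monoid.CoprodI.lift_of]
  exact (zmodMulHom_intCast 2 a' a'_sq 1).trans (zpow_one _)

lemma b'_eq_Lf : Lf (Monoid.CoprodI.of (Multiplicative.ofAdd (((1 : ℤ) : ZMod 3)) : Hfam false))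
    = b' := by
  rw [Lf, Monoid.CoprodI.lift_of]
  exact (zmodMulHom_intCast 3 b' b'_cube 1).trans (zpow_one _)

lemma pi_mem (x : SL2Z) : pi x ∈ Lf.range := by
  have hle : Subgroup.closure ({S, T} : Set SL2Z) ≤ Subgroup.comap pi Lf.range := by
    rw [Subgroup.closure_le]
    rintro y hy
    rcases hy with rfl | rfl
    · exact ⟨_, a'_eq_Lf⟩
    · show pi T ∈ Lf.range
      have : pi T = b'⁻¹ * a'⁻¹ := by
        rw [T_eq, _root_.map_mul, _root_.map_inv, _root_.map_inv]; rfl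
      rw [this]
      exact mul_mem (inv_mem ⟨_, b'_eq_Lf⟩) (inv_mem ⟨_, a'_eq_Lf⟩)
  exact hle (mem_closure_ST x)



/-! ### assembling the homomorphism -/

noncomputable def eIso : Monoid.CoprodI Hfam ≃* Lf.range :=
  MulEquiv.ofBijective Lf.rangeRestrict
    ⟨fun x y hxy => Lf_inj (congrArg Subtype.val hxy), Lf.rangeRestrict_surjective⟩

noncomputable def gfam : ∀ b, Hfam b →* GT := fun b =>
  match b with
  | true => zmodMulHom 2 σ σ_sq
  | false => zmodMulHom 3 β β_cube

noncomputable def φ : SL2Z →* GT :=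
  (Monoid.CoprodI.lift gfam).comp
    ((eIso.symm.toMonoidHom).comp (pi.codRestrict Lf.range pi_mem))

lemma φ_eval (x : SL2Z) (w : Monoid.CoprodI Hfam) (hw : pi x = Lf w) :
    φ x = Monoid.CoprodI.lift gfam w := by
  have h1 : (pi.codRestrict Lf.range pi_mem) x = eIso w := by
    apply Subtype.ext
    show pi x = (Lf.rangeRestrict w : Equiv.Perm ℍ)
    rw [hw, MonoidHom.coe_rangeRestrict]
  show (Monoid.CoprodI.lift gfam) (eIso.symm ((pi.codRestrict Lf.range pi_mem) x)) = _
  rw [h1, MulEquiv.symm_apply_apply]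

lemma φ_S : φ S = σ := by
  rw [φ_eval S (Monoid.CoprodI.of (Multiplicative.ofAdd (((1 : ℤ) : ZMod 2)) : Hfam true))
    a'_eq_Lf.symm]
  rw [Monoid.CoprodI.lift_of]
  exact (zmodMulHom_intCast 2 σ σ_sq 1).trans (zpow_one _)

lemma φ_B : φ B = β := by
  rw [φ_eval B (Monoid.CoprodI.of (Multiplicative.ofAdd (((1 : ℤ) : ZMod 3)) : Hfam false))
    b'_eq_Lf.symm]
  rw [Monoid.CoprodI.lift_of]
  exact (zmodMulHom_intCast 3 β β_cube 1).trans (zpow_one _)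

lemma φ_T : φ T = τ := by
  rw [T_eq, _root_.map_mul, _root_.map_inv, _root_.map_inv, φ_S, φ_B, τ]

/-! ### the range of φ is infinite -/

lemma range_infinite : (Set.range φ).Infinite := by
  apply Set.infinite_of_injective_forall_mem
    (f := fun n : ℕ => ((β * σ * β⁻¹ * σ) ^ n : GT))
  · intro m n hmn
    have := congrArg Units.val hmn
    rw [translation_pow, translation_pow] at this
    have h2 := (aff_inj this).2
    have hne : (ω - 1) ≠ 0 := sub_ne_zero.mpr ω_ne_one
    have : (m : ℂ) = n := by
      exact mul_right_cancel₀ hne h2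
    exact_mod_cast this
  · intro n
    have hβ : β ∈ Set.range φ := ⟨B, φ_B⟩
    have hσ : σ ∈ Set.range φ := ⟨S, φ_S⟩
    have hmem : (β * σ * β⁻¹ * σ) ^ n ∈ MonoidHom.range φ := by
      have h1 : β ∈ MonoidHom.range φ := ⟨B, φ_B⟩
      have h2 : σ ∈ MonoidHom.range φ := ⟨S, φ_S⟩
      exact pow_mem (mul_mem (mul_mem (mul_mem h1 h2) (inv_mem h1)) h2) n
    rcases hmem with ⟨x, hx⟩
    exact ⟨x, hx⟩

lemma ker_infinite_index : ¬ (MonoidHom.ker φ).FiniteIndex := by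
  intro h
  have hidx := h.index_ne_zero
  rw [Subgroup.index_ker] at hidx
  apply hidx
  have : (MonoidHom.range φ : Set GT).Infinite := by
    have : (MonoidHom.range φ : Set GT) = Set.range φ := by
      ext x; simp [MonoidHom.mem_range]
    rw [this]
    exact range_infinite
  have : Infinite (MonoidHom.range φ) := Set.infinite_coe_iff.mpr this
  exact Nat.card_eq_zero_of_infinite


/-! ### identification of elementary matrices -/

lemma elem_upper (n : ℤ) (pf : (!![1, n; 0, 1] : Matrix (Fin 2) (Fin 2) ℤ).det = 1) :
    (⟨!![1, n; 0, 1], pf⟩ : SL2Z) = T ^ n := by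
  apply Subtype.ext
  rw [ModularGroup.coe_T_zpow]

lemma elem_lower (n : ℤ) (pf : (!![1, 0; n, 1] : Matrix (Fin 2) (Fin 2) ℤ).det = 1) :
    (⟨!![1, 0; n, 1], pf⟩ : SL2Z) = S * T ^ (-n) * S⁻¹ := by
  apply Subtype.ext
  rw [Matrix.SpecialLinearGroup.coe_mul, Matrix.SpecialLinearGroup.coe_mul,
    Matrix.SpecialLinearGroup.coe_inv, ModularGroup.coe_S, ModularGroup.coe_T_zpow,
    Matrix.adjugate_fin_two]
  show (!![1, 0; n, 1] : Matrix (Fin 2) (Fin 2) ℤ)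
      = !![0, -1; 1, 0] * !![1, -n; 0, 1] * !![0, 1; -1, 0]
  rw [Matrix.mul_fin_two, Matrix.mul_fin_two]
  norm_num

lemma τ_zpow_eq_one (n : ℤ) (hn : (6 : ℤ) ∣ n) : τ ^ n = 1 := by
  obtain ⟨c, rfl⟩ := hn
  rw [_root_.zpow_mul, show ((6:ℤ) = ((6:ℕ):ℤ)) by norm_num, zpow_natCast, τ_pow_six,
    _root_.one_zpow]

end SLPP

/-- For `m ≥ 8000` and `N = 24m`, the normal closure in `SL(2,ℤ)` of the subgroup
generated by the elementary matrices `[[1,N],[0,1]]` and `[[1,0],[N,1]]` has infinite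
index in `SL(2,ℤ)`. -/
theorem normalClosure_elementary_pow_infiniteIndex (m : ℕ) (hm : 8000 ≤ m) :
    ¬ (Subgroup.normalClosure
        ((Subgroup.closure
          {(⟨!![1, (24 * (m : ℤ)); 0, 1], by
              simp [Matrix.det_fin_two_of]⟩ : Matrix.SpecialLinearGroup (Fin 2) ℤ),
           (⟨!![1, 0; (24 * (m : ℤ)), 1], by
              simp [Matrix.det_fin_two_of]⟩ : Matrix.SpecialLinearGroup (Fin 2) ℤ)} :
          Subgroup (Matrix.SpecialLinearGroup (Fin 2) ℤ)) :
          Set (Matrix.SpecialLinearGroup (Fin 2) ℤ))).FiniteIndex := by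
  classical
  intro hFI
  have hdvd : (6 : ℤ) ∣ 24 * (m : ℤ) := ⟨4 * (m : ℤ), by ring⟩
  have hle : Subgroup.normalClosure
        ((Subgroup.closure
          {(⟨!![1, (24 * (m : ℤ)); 0, 1], by
              simp [Matrix.det_fin_two_of]⟩ : Matrix.SpecialLinearGroup (Fin 2) ℤ),
           (⟨!![1, 0; (24 * (m : ℤ)), 1], by
              simp [Matrix.det_fin_two_of]⟩ : Matrix.SpecialLinearGroup (Fin 2) ℤ)} :
          Subgroup (Matrix.SpecialLinearGroup (Fin 2) ℤ)) :
          Set (Matrix.SpecialLinearGroup (Fin 2) ℤ)) ≤ MonoidHom.ker SLPP.φ := by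
    apply Subgroup.normalClosure_le_normal
    have hcl : (Subgroup.closure
          {(⟨!![1, (24 * (m : ℤ)); 0, 1], by
              simp [Matrix.det_fin_two_of]⟩ : Matrix.SpecialLinearGroup (Fin 2) ℤ),
           (⟨!![1, 0; (24 * (m : ℤ)), 1], by
              simp [Matrix.det_fin_two_of]⟩ : Matrix.SpecialLinearGroup (Fin 2) ℤ)} :
          Subgroup (Matrix.SpecialLinearGroup (Fin 2) ℤ)) ≤ MonoidHom.ker SLPP.φ := by
      rw [Subgroup.closure_le]
      rintro x (rfl | rfl)
      · refine SetLike.mem_coe.mpr ?_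
        refine MonoidHom.mem_ker.mpr ((congrArg SLPP.φ (SLPP.elem_upper _ _)).trans ?_)
        rw [map_zpow, SLPP.φ_T]
        exact SLPP.τ_zpow_eq_one _ hdvd
      · refine SetLike.mem_coe.mpr ?_
        refine MonoidHom.mem_ker.mpr ((congrArg SLPP.φ (SLPP.elem_lower _ _)).trans ?_)
        rw [_root_.map_mul,
          _root_.map_mul, map_zpow, _root_.map_inv, SLPP.φ_T, SLPP.φ_S]
        rw [SLPP.τ_zpow_eq_one _ (dvd_neg.mpr hdvd)]
        group
    intro x hx
    exact hcl hx
  haveI := hFI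
  exact SLPP.ker_infinite_index (Subgroup.finiteIndex_of_le hle)
end PP
end

section
/- Let H be a group and let C be a subgroup of the centre of H. Let N be a normal subgroup of H such that the quotient H/N is a finitely generated free abelian group, C ∩ N = {1}, and the subgroup C·N has finite index in H. Then there exists a finite-index subgroup U of Aut(C) such that every α ∈ U extends to an automorphism φ of H with φ(C) = C, φ(c) = α(c) for all c ∈ C, and φ(n) = n for all n ∈ N. -/
/-- Let `H` be a group, `C` a subgroup of its centre, and `N ⊴ H` with `H/N`
finitely generated free abelian, `C ∩ N = {1}` and `C·N` of finite index in `H`.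
Then a finite-index subgroup of `Aut(C)` consists of automorphisms extending to
automorphisms of `H` preserving `C` and fixing `N` pointwise. -/
theorem finiteIndex_aut_extends
    (H : Type*) [Group H] (C N : Subgroup H) [N.Normal]
    (hC : C ≤ Subgroup.center H)
    (hfree : ∃ r : ℕ, Nonempty ((H ⧸ N) ≃* Multiplicative (Fin r → ℤ)))
    (hCN : C ⊓ N = ⊥)
    (hfin : (C ⊔ N).FiniteIndex) :
    ∃ U : Subgroup (MulAut ↥C), U.FiniteIndex ∧
      ∀ α ∈ U, ∃ φ : MulAut H,
        Subgroup.map φ.toMonoidHom C = C ∧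
        (∀ c : ↥C, φ ↑c = ↑(α c)) ∧
        (∀ n ∈ N, φ n = n) := by
  classical
  obtain ⟨r, ⟨e⟩⟩ := hfree
  -- `C` is commutative since it is central
  have hcen : ∀ (c : ↥C) (h : H), h * ↑c = ↑c * h := fun c h =>
    (Subgroup.mem_center_iff.mp (hC c.2) h)
  letI : CommGroup ↥C :=
    { (inferInstance : Group ↥C) with
      mul_comm := fun x y => Subtype.ext (hcen y ↑x) }
  set π : H →* H ⧸ N := QuotientGroup.mk' N with hπdef
  -- the quotient is commutative
  have Qcomm : ∀ a b : H ⧸ N, a * b = b * a := by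
    intro a b
    apply e.injective
    rw [map_mul, map_mul, mul_comm]
  -- the image of `C` in the quotient
  set D : Subgroup (H ⧸ N) := C.map π with hDdef
  haveI hDnormal : D.Normal :=
    ⟨fun d hd g => by rw [Qcomm g d, mul_assoc, mul_inv_cancel, mul_one]; exact hd⟩
  set m : ℕ := D.index with hmdef
  have hm : m ≠ 0 := by
    have h1 : D.index = (C ⊔ (QuotientGroup.mk' N).ker).index * (QuotientGroup.mk' N).range.index :=
      Subgroup.index_map C (QuotientGroup.mk' N)
    rw [QuotientGroup.ker_mk', MonoidHom.range_eq_top.mpr (QuotientGroup.mk'_surjective N),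
      Subgroup.index_top, mul_one] at h1
    rw [hmdef, h1]
    exact hfin.index_ne_zero
  -- injectivity of `π` on `C`
  have πinjC : ∀ x y : H, x ∈ C → y ∈ C → π x = π y → x = y := by
    intro x y hx hy hxy
    have h1 : x⁻¹ * y ∈ N := by
      rw [← QuotientGroup.ker_mk' N]
      have : π (x⁻¹ * y) = 1 := by rw [map_mul, map_inv, hxy, inv_mul_cancel]
      exact this
    have h2 : x⁻¹ * y ∈ C ⊓ N := ⟨C.mul_mem (C.inv_mem hx) hy, h1⟩
    rw [hCN, Subgroup.mem_bot] at h2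
    exact (eq_of_inv_mul_eq_one h2 : x = y)
  have πinj : ∀ x y : ↥C, π ↑x = π ↑y → x = y := fun x y h =>
    Subtype.ext (πinjC _ _ x.2 y.2 h)
  -- `m`-th powers are injective on `C`
  have powinj : ∀ x y : ↥C, x ^ m = y ^ m → x = y := by
    intro x y h
    apply πinj
    apply e.injective
    have h1 : (e (π ↑x)) ^ m = (e (π ↑y)) ^ m := by
      rw [← map_pow, ← map_pow, ← map_pow, ← map_pow]
      exact congrArg (fun c : ↥C => e (π (↑c))) h
    have h2 : m • Multiplicative.toAdd (e (π ↑x)) = m • Multiplicative.toAdd (e (π ↑y)) := by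
      rw [← toAdd_pow, ← toAdd_pow, h1]
    have h3 : Multiplicative.toAdd (e (π ↑x)) = Multiplicative.toAdd (e (π ↑y)) := by
      funext i
      have h4 := congrFun h2 i
      simp only [Pi.smul_apply, nsmul_eq_mul] at h4
      exact mul_left_cancel₀ (by exact_mod_cast hm) h4
    exact Multiplicative.toAdd.injective h3
  -- the subgroup of `m`-th powers
  set Pm : Subgroup ↥C := (powMonoidHom m : ↥C →* ↥C).range with hPmdef
  have memPm : ∀ z : ↥C, z ∈ Pm ↔ ∃ x : ↥C, x ^ m = z := by
    intro z
    rw [hPmdef, MonoidHom.mem_range]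
    rfl
  -- `Pm` is invariant under every automorphism
  have hmapPm : ∀ α : MulAut ↥C, Pm.map α.toMonoidHom = Pm := by
    intro α
    apply le_antisymm
    · rintro _ ⟨z, hz, rfl⟩
      obtain ⟨x, hx⟩ := (memPm z).mp hz
      exact (memPm _).mpr ⟨α x, by
        simp only [MulEquiv.toMonoidHom_eq_coe, MonoidHom.coe_coe, ← hx, map_pow]⟩
    · rintro z hz
      obtain ⟨x, hx⟩ := (memPm z).mp hz
      refine ⟨α.symm x ^ m, (memPm _).mpr ⟨α.symm x, rfl⟩, ?_⟩
      simp only [MulEquiv.toMonoidHom_eq_coe, MonoidHom.coe_coe, map_pow,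
        MulEquiv.apply_symm_apply, hx]
  -- the action of automorphisms on `C ⧸ Pm`
  set Φ : MulAut ↥C →* Equiv.Perm (↥C ⧸ Pm) :=
    { toFun := fun α => (QuotientGroup.congr Pm Pm (α : ↥C ≃* ↥C) (hmapPm α)).toEquiv
      map_one' := by
        apply Equiv.ext
        intro q
        induction q using QuotientGroup.induction_on with
        | H c => rfl
      map_mul' := by
        intro α β
        apply Equiv.ext
        intro q
        induction q using QuotientGroup.induction_on with
        | H c => rfl } with hΦdef
  have hΦmk : ∀ (α : MulAut ↥C) (c : ↥C),
      Φ α (QuotientGroup.mk c) = QuotientGroup.mk (α c) := by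
    intro α c
    rfl
  -- finiteness of `C ⧸ Pm`
  haveI : NeZero (m ^ 2) := ⟨pow_ne_zero 2 hm⟩
  have hψ : ∃ ψ : ↥C →* Multiplicative (Fin r → ZMod (m ^ 2)), ∀ c : ↥C,
      ψ c = Multiplicative.ofAdd (fun i => ((Multiplicative.toAdd (e (π ↑c)) i : ℤ) : ZMod (m ^ 2))) := by
    refine ⟨MonoidHom.mk' (fun c => Multiplicative.ofAdd
        (fun i => ((Multiplicative.toAdd (e (π ↑c)) i : ℤ) : ZMod (m ^ 2)))) ?_, fun c => rfl⟩
    intro x y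
    simp only [Subgroup.coe_mul, map_mul]
    rw [← ofAdd_add]
    congr 1
    funext i
    simp [toAdd_mul]
  obtain ⟨ψ, hψdef⟩ := hψ
  have hkerψ : ∀ c : ↥C, ψ c = 1 → c ∈ Pm := by
    intro c hc
    rw [hψdef] at hc
    have hc' : ∀ i, ((Multiplicative.toAdd (e (π ↑c)) i : ℤ) : ZMod (m ^ 2)) = 0 := by
      intro i
      have := congrFun (congrArg Multiplicative.toAdd hc) i
      simpa using this
    have hdvd : ∀ i, ((m : ℤ) ^ 2) ∣ Multiplicative.toAdd (e (π ↑c)) i := by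
      intro i
      have := (ZMod.intCast_zmod_eq_zero_iff_dvd _ (m ^ 2)).mp (hc' i)
      exact_mod_cast this
    set w : Fin r → ℤ := fun i => Multiplicative.toAdd (e (π ↑c)) i / ((m : ℤ) ^ 2) with hwdef
    have hw : Multiplicative.toAdd (e (π ↑c)) = (m ^ 2) • w := by
      funext i
      simp only [hwdef, Pi.smul_apply, nsmul_eq_mul, Nat.cast_pow]
      exact (Int.mul_ediv_cancel' (hdvd i)).symm
    set q : H ⧸ N := e.symm (Multiplicative.ofAdd w) with hqdef
    have hq : π ↑c = q ^ (m ^ 2) := by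
      apply e.injective
      rw [map_pow, hqdef, MulEquiv.apply_symm_apply]
      have : (Multiplicative.ofAdd w) ^ (m ^ 2) = Multiplicative.ofAdd ((m ^ 2) • w) := by
        rw [ofAdd_nsmul]
      rw [this, ← hw]
      simp
    obtain ⟨c₀, hc₀C, hc₀⟩ := Subgroup.mem_map.mp (D.pow_index_mem q)
    have hfinal : π (c₀ ^ m) = π ↑c := by
      rw [map_pow, hc₀, hq, ← pow_mul, sq]
    have : (⟨c₀, hc₀C⟩ : ↥C) ^ m = c := by
      apply πinj
      rw [← hfinal]
      norm_num [SubmonoidClass.coe_pow]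
    exact (memPm c).mpr ⟨⟨c₀, hc₀C⟩, this⟩
  haveI : Finite (↥C ⧸ ψ.ker) :=
    Finite.of_injective _ (QuotientGroup.kerLift_injective ψ)
  have hkerle : ψ.ker ≤ Subgroup.comap (MonoidHom.id ↥C) Pm := fun c hc => hkerψ c hc
  have hsur : Function.Surjective (QuotientGroup.map ψ.ker Pm (MonoidHom.id ↥C) hkerle) := by
    intro q
    induction q using QuotientGroup.induction_on with
    | H c => exact ⟨QuotientGroup.mk c, rfl⟩
  haveI : Finite (↥C ⧸ Pm) := Finite.of_surjective _ hsur
  haveI : Finite Φ.range := Subtype.finite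
  refine ⟨Φ.ker, inferInstance, ?_⟩
  -- now the main construction
  intro α hα
  have hαPm : ∀ c : ↥C, ∃ x : ↥C, x ^ m = c⁻¹ * α c := by
    intro c
    apply (memPm _).mp
    have h1 : Φ α = 1 := hα
    have h2 : (QuotientGroup.mk (α c) : ↥C ⧸ Pm) = QuotientGroup.mk c := by
      rw [← hΦmk α c, h1]
      rfl
    exact (QuotientGroup.eq).mp h2.symm
  choose γ hγ using hαPm
  -- `γ` respects products and powers
  have γmul : ∀ c₁ c₂ : ↥C, γ (c₁ * c₂) = γ c₁ * γ c₂ := by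
    intro c₁ c₂
    apply powinj
    rw [mul_pow, hγ, hγ, hγ, map_mul, mul_inv]
    simp [mul_comm, mul_assoc, mul_left_comm]
  have γpow : ∀ (c : ↥C) (k : ℕ), γ (c ^ k) = γ c ^ k := by
    intro c k
    apply powinj
    rw [hγ, map_pow, ← inv_pow, ← mul_pow, ← pow_mul, mul_comm k m, pow_mul, hγ]
  have γone : γ 1 = 1 := by
    apply powinj
    rw [hγ, map_one, one_pow, inv_one, one_mul]
  -- the `m`-th root map `R : H → C`
  have hmem : ∀ h : H, ∃ c : ↥C, π ↑c = π h ^ m := by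
    intro h
    obtain ⟨x, hx, hx2⟩ := Subgroup.mem_map.mp (D.pow_index_mem (π h))
    exact ⟨⟨x, hx⟩, hx2⟩
  choose R hR using hmem
  have Rmul : ∀ a b : H, R (a * b) = R a * R b := by
    intro a b
    apply πinj
    rw [Subgroup.coe_mul, map_mul, hR, hR, hR, map_mul]
    exact Commute.mul_pow (Qcomm (π a) (π b)) m
  have RC : ∀ c : ↥C, R ↑c = c ^ m := by
    intro c
    apply πinj
    rw [hR, SubmonoidClass.coe_pow, map_pow]
  have RN : ∀ n ∈ N, R n = 1 := by
    intro n hn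
    apply πinj
    rw [hR, Subgroup.coe_one, map_one]
    have : π n = 1 := (QuotientGroup.eq_one_iff n).mpr hn
    rw [this, one_pow]
  -- the two mutually inverse maps
    -- F h = h * γ (R h), G h = h * (α⁻¹ (γ (R h)))⁻¹
  set F : H → H := fun h => h * ↑(γ (R h)) with hFdef
  set G : H → H := fun h => h * ↑((α.symm (γ (R h)))⁻¹) with hGdef
  have Fmul : ∀ a b : H, F (a * b) = F a * F b := by
    intro a b
    rw [hFdef]
    simp only [Rmul, γmul, Subgroup.coe_mul]
    rw [mul_assoc a b, mul_assoc a (↑(γ (R a))), ← mul_assoc (↑(γ (R a))) b,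
      ← hcen (γ (R a)) b, mul_assoc b]
  have FC : ∀ c : ↥C, F ↑c = ↑(α c) := by
    intro c
    rw [hFdef]
    simp only [RC, γpow]
    rw [← Subgroup.coe_mul]
    congr 1
    rw [hγ c]
    group
  have FN : ∀ n ∈ N, F n = n := by
    intro n hn
    rw [hFdef]
    simp [RN n hn, γone]
  have keyGF : ∀ h : H, γ (R (F h)) = α (γ (R h)) := by
    intro h
    rw [hFdef]
    simp only [Rmul, γmul, RC, γpow]
    rw [hγ (γ (R h))]
    group
  have GF : ∀ h : H, G (F h) = h := by
    intro h
    rw [hGdef]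
    simp only [keyGF, MulEquiv.symm_apply_apply]
    rw [hFdef]
    rw [mul_assoc, ← Subgroup.coe_mul, mul_inv_cancel, Subgroup.coe_one, mul_one]
  have keyFG : ∀ h : H, γ (R (G h)) = α.symm (γ (R h)) := by
    intro h
    rw [hGdef]
    simp only [Rmul, γmul, RC, γpow]
    rw [hγ ((α.symm (γ (R h)))⁻¹)]
    simp only [map_inv, MulEquiv.apply_symm_apply, inv_inv]
    rw [mul_comm (α.symm (γ (R h))) ((γ (R h))⁻¹), mul_inv_cancel_left]
  have FG : ∀ h : H, F (G h) = h := by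
    intro h
    rw [hFdef]
    simp only [keyFG]
    rw [hGdef]
    rw [mul_assoc, ← Subgroup.coe_mul, inv_mul_cancel, Subgroup.coe_one, mul_one]
  set φ : MulAut H :=
    { toFun := F
      invFun := G
      left_inv := GF
      right_inv := FG
      map_mul' := Fmul } with hφdef
  refine ⟨φ, ?_, ?_, ?_⟩
  · apply le_antisymm
    · rintro _ ⟨x, hx, rfl⟩
      have : φ x = ↑(α ⟨x, hx⟩) := FC ⟨x, hx⟩
      rw [MulEquiv.toMonoidHom_eq_coe, MonoidHom.coe_coe]
      rw [show (φ : H → H) x = φ x from rfl]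
      rw [this]
      exact (α ⟨x, hx⟩).2
    · intro c hc
      refine ⟨↑(α.symm ⟨c, hc⟩), (α.symm ⟨c, hc⟩).2, ?_⟩
      rw [MulEquiv.toMonoidHom_eq_coe, MonoidHom.coe_coe]
      show F ↑(α.symm ⟨c, hc⟩) = c
      rw [FC]
      simp
  · intro c
    exact FC c
  · intro n hn
    exact FN n hn
end

section
/- Let Ĉ be a finitely generated free abelian group and let C ≤ Ĉ be a subgroup of finite index. Then there exists a finite-index subgroup U of Aut(C) such that every α ∈ U is the restriction to C of some automorphism α̂ of Ĉ (in particular α̂(C) = C and α̂|_C = α). -/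
/-- If `C` is a finite-index subgroup of a finitely generated free abelian group `Ahat`,
then a finite-index subgroup of `Aut(C)` consists of automorphisms which are restrictions
of automorphisms of `Ahat` (preserving `C`). -/
theorem finiteIndex_aut_of_finiteIndex_subgroup_extends
    (Ahat : Type*) [AddCommGroup Ahat] [Module.Free ℤ Ahat] [Module.Finite ℤ Ahat]
    (C : AddSubgroup Ahat) (hC : C.FiniteIndex) :
    ∃ U : AddSubgroup (AddAut ↥C), U.FiniteIndex ∧
      ∀ α ∈ U, ∃ β : AddAut Ahat,
        AddSubgroup.map β.toAddMonoidHom C = C ∧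
        ∀ c : ↥C, β ↑c = ↑(α c) := by
  classical
  set n : ℕ := C.index with hndef
  have hn0 : n ≠ 0 := hC.index_ne_zero
  -- the subgroup n²C of C
  set Q : AddSubgroup ↥C := (zsmulAddGroupHom ((n : ℤ) ^ 2) : ↥C →+ ↥C).range with hQdef
  have hQmem : ∀ q : ↥C, q ∈ Q ↔ ∃ c : ↥C, ((n : ℤ) ^ 2) • c = q := by
    intro q; rfl
  have hQmap : ∀ α : AddAut ↥C, AddSubgroup.map (↑(α : ↥C ≃+ ↥C) : ↥C →+ ↥C) Q = Q := by
    intro α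
    ext q
    simp only [AddSubgroup.mem_map]
    constructor
    · rintro ⟨x, hx, rfl⟩
      obtain ⟨c, rfl⟩ := (hQmem x).1 hx
      exact (hQmem _).2 ⟨α c, by simp⟩
    · intro hq
      obtain ⟨c, rfl⟩ := (hQmem q).1 hq
      exact ⟨α.symm (((n : ℤ) ^ 2) • c), (hQmem _).2 ⟨α.symm c, by simp⟩,
        by simp⟩
  -- the reduction homomorphism to Aut(C/Q)
  let F : AddAut ↥C →+ AddAut (↥C ⧸ Q) :=
    { toFun := fun α => (QuotientAddGroup.congr Q Q (α : ↥C ≃+ ↥C) (hQmap α) : AddAut (↥C ⧸ Q))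
      map_zero' := by
        ext x
        refine QuotientAddGroup.induction_on x ?_
        intro c; rfl
      map_add' := by
        intro α β
        ext x
        refine QuotientAddGroup.induction_on x ?_
        intro c; rfl }
  have hF : ∀ (α : AddAut ↥C) (c : ↥C), F α ((c : ↥C ⧸ Q)) = ((α c : ↥C) : ↥C ⧸ Q) := by
    intro α c; rfl
  -- the kernel condition
  have hker : ∀ α ∈ F.ker, ∀ c : ↥C, α c - c ∈ Q := by
    intro α hα c
    have h1 : F α ((c : ↥C ⧸ Q)) = ((c : ↥C) : ↥C ⧸ Q) := by
      rw [AddMonoidHom.mem_ker.mp hα]; rfl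
    rw [hF] at h1
    have h2 := (QuotientAddGroup.eq (s := Q)).1 h1
    rw [neg_add_eq_sub] at h2
    simpa using Q.neg_mem h2
  -- finiteness of C ⧸ Q
  have hCfg : AddGroup.FG ↥C := by
    have : Module.Finite ℤ ↥(AddSubgroup.toIntSubmodule C) := by
      have : IsNoetherian ℤ Ahat := isNoetherian_of_isNoetherianRing_of_finite ℤ Ahat
      infer_instance
    exact Module.Finite.iff_addGroup_fg.mp this
  have hfin : Finite (↥C ⧸ Q) := by
    have : AddGroup.FG (↥C ⧸ Q) := by
      exact AddGroup.fg_of_surjective (QuotientAddGroup.mk'_surjective Q)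
    refine AddCommGroup.finite_of_fg_torsion _ ?_
    intro x
    refine QuotientAddGroup.induction_on x ?_
    intro c
    refine isOfFinAddOrder_iff_nsmul_eq_zero.mpr ⟨n ^ 2, by positivity, ?_⟩
    have : ((n ^ 2 : ℕ) • c : ↥C) ∈ Q := (hQmem _).2 ⟨c, by norm_cast⟩
    rw [← QuotientAddGroup.mk_nsmul]
    exact (QuotientAddGroup.eq_zero_iff _).2 this
  have hfinAut : Finite (AddAut (↥C ⧸ Q)) := by
    exact Finite.of_injective (fun e => (e : (↥C ⧸ Q) → (↥C ⧸ Q)))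
      fun a b h => by ext x; exact congrFun h x
  refine ⟨F.ker, ?_, ?_⟩
  · constructor
    rw [AddSubgroup.index_ker]
    have : Nat.card ↥F.range ≠ 0 := Nat.card_pos.ne'
    exact this
  -- the main construction
  intro α hα
  have hsmulC : ∀ a : Ahat, (n : ℤ) • a ∈ C := by
    intro a
    have := AddSubgroup.nsmul_index_mem C a
    simpa using this
  set s : Ahat →+ Ahat := zsmulAddGroupHom (n : ℤ) with hsdef
  have hsapp : ∀ a : Ahat, s a = (n : ℤ) • a := fun a => rfl
  have hsinj : Function.Injective s := by
    intro a b h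
    exact smul_right_injective Ahat (by exact_mod_cast hn0) h
  set N : AddSubgroup Ahat := s.range with hNdef
  have hNle : N ≤ C := by
    rintro x ⟨a, rfl⟩
    exact hsmulC a
  -- `e : Ahat ≃+ N`
  have hbij : Function.Bijective s.rangeRestrict :=
    ⟨fun a b h => hsinj (congrArg Subtype.val h), s.rangeRestrict_surjective⟩
  set e : Ahat ≃+ ↥N := AddEquiv.ofBijective s.rangeRestrict hbij with hedef
  have heapp : ∀ a : Ahat, ((e a : ↥N) : Ahat) = (n : ℤ) • a := fun a => rfl
  -- Q maps into N
  have hQN : ∀ q : ↥C, q ∈ Q → (q : Ahat) ∈ N := by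
    intro q hq
    obtain ⟨c, rfl⟩ := (hQmem q).1 hq
    exact ⟨(n : ℤ) • (c : Ahat), by rw [hsapp]; push_cast [smul_smul]; ring_nf⟩
  set NC : AddSubgroup ↥C := N.addSubgroupOf C with hNCdef
  have hNCmem : ∀ x : ↥C, x ∈ NC ↔ (x : Ahat) ∈ N := fun x => Iff.rfl
  have hpres : ∀ γ ∈ F.ker, ∀ x : ↥C, x ∈ NC → γ x ∈ NC := by
    intro γ hγ x hx
    have h1 : γ x - x ∈ Q := hker γ hγ x
    have h2 : ((γ x - x : ↥C) : Ahat) ∈ N := hQN _ h1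
    have : ((γ x : ↥C) : Ahat) = ((γ x - x : ↥C) : Ahat) + (x : Ahat) := by
      push_cast; abel
    rw [hNCmem, this]
    exact N.add_mem h2 ((hNCmem x).1 hx)
  have hstab : AddSubgroup.map (↑(α : ↥C ≃+ ↥C) : ↥C →+ ↥C) NC = NC := by
    ext x
    simp only [AddSubgroup.mem_map]
    constructor
    · rintro ⟨y, hy, rfl⟩
      exact hpres α hα y hy
    · intro hx
      refine ⟨(-α) x, hpres (-α) (F.ker.neg_mem hα) x hx, ?_⟩
      exact (α : ↥C ≃+ ↥C).apply_symm_apply x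
  -- the automorphism of NC induced by α
  set ψ : ↥NC ≃+ ↥NC :=
    (AddEquiv.addSubgroupMap (α : ↥C ≃+ ↥C) NC).trans (AddEquiv.addSubgroupCongr hstab)
    with hψdef
  have hψapp : ∀ x : ↥NC, ((ψ x : ↥C) : Ahat) = ((α (x : ↥C) : ↥C) : Ahat) := fun x => rfl
  set θ : ↥N ≃+ ↥NC := (AddSubgroup.addSubgroupOfEquivOfLe hNle).symm with hθdef
  have hθapp : ∀ x : ↥N, (((θ x : ↥C)) : Ahat) = (x : Ahat) := fun x => rfl
  have hθsymm : ∀ x : ↥NC, ((θ.symm x : Ahat)) = ((x : ↥C) : Ahat) := fun x => rfl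
  set β : AddAut Ahat := ((e.trans (θ.trans (ψ.trans θ.symm))).trans e.symm : Ahat ≃+ Ahat)
    with hβdef
  have hβapp : ∀ c : ↥C, β (c : Ahat) = ((α c : ↥C) : Ahat) := by
    intro c
    have key : e ((α c : ↥C) : Ahat) = θ.symm (ψ (θ (e (c : Ahat)))) := by
      apply Subtype.ext
      rw [heapp, hθsymm, hψapp]
      have hx : ((θ (e (c : Ahat)) : ↥C)) = (n : ℤ) • c := by
        apply Subtype.ext
        rw [hθapp, heapp]
        push_cast
        rfl
      rw [hx]
      push_cast [map_zsmul]
      rfl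
    show e.symm (θ.symm (ψ (θ (e (c : Ahat))))) = ((α c : ↥C) : Ahat)
    rw [← key, AddEquiv.symm_apply_apply]
  have hβsymm : ∀ c : ↥C, β.symm (c : Ahat) = (((-α) c : ↥C) : Ahat) := by
    intro c
    have : β (((-α) c : ↥C) : Ahat) = (c : Ahat) := by
      rw [hβapp]
      congr 1
      exact (α : ↥C ≃+ ↥C).apply_symm_apply c
    calc β.symm (c : Ahat) = β.symm (β (((-α) c : ↥C) : Ahat)) := by rw [this]
      _ = (((-α) c : ↥C) : Ahat) := (β : Ahat ≃+ Ahat).symm_apply_apply _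
  refine ⟨β, ?_, hβapp⟩
  ext x
  simp only [AddSubgroup.mem_map]
  constructor
  · rintro ⟨c, hc, rfl⟩
    show β c ∈ C
    rw [hβapp ⟨c, hc⟩]
    exact (α ⟨c, hc⟩).2
  · intro hx
    refine ⟨(((-α) ⟨x, hx⟩ : ↥C) : Ahat), ((-α) ⟨x, hx⟩).2, ?_⟩
    show β _ = x
    rw [hβapp]
    exact congrArg Subtype.val ((α : ↥C ≃+ ↥C).apply_symm_apply ⟨x, hx⟩)
end

section
/- Let F be the free group on three generators x, y, z, and let φ be the automorphism of F determined by φ(x) = xz, φ(y) = y, φ(z) = z. Then for every integer m ≠ 0, every g ∈ F and every u ∈ γ₃(F), one has φ^m(⁅x,y⁆) ≠ u · g ⁅x,y⁆ g⁻¹. In particular, no nonzero power of φ agrees with an inner automorphism of F on ⁅x,y⁆ modulo γ₃(F). -/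
open scoped commutatorElement

/-- The integer Heisenberg group, as triples `(a, b, c)` with multiplication
`(a,b,c)*(a',b',c') = (a+a', b+b', c+c'+a*b')`. -/
@[ext]
structure Heis where
  a : ℤ
  b : ℤ
  c : ℤ

namespace Heis

instance : Mul Heis := ⟨fun p q => ⟨p.a + q.a, p.b + q.b, p.c + q.c + p.a * q.b⟩⟩
instance : One Heis := ⟨⟨0, 0, 0⟩⟩
instance : Inv Heis := ⟨fun p => ⟨-p.a, -p.b, -p.c + p.a * p.b⟩⟩

@[simp] lemma mul_a (p q : Heis) : (p * q).a = p.a + q.a := rfl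
@[simp] lemma mul_b (p q : Heis) : (p * q).b = p.b + q.b := rfl
@[simp] lemma mul_c (p q : Heis) : (p * q).c = p.c + q.c + p.a * q.b := rfl
@[simp] lemma one_a : (1 : Heis).a = 0 := rfl
@[simp] lemma one_b : (1 : Heis).b = 0 := rfl
@[simp] lemma one_c : (1 : Heis).c = 0 := rfl
@[simp] lemma inv_a (p : Heis) : p⁻¹.a = -p.a := rfl
@[simp] lemma inv_b (p : Heis) : p⁻¹.b = -p.b := rfl
@[simp] lemma inv_c (p : Heis) : p⁻¹.c = -p.c + p.a * p.b := rfl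

instance : Group Heis where
  mul_assoc p q r := by ext <;> simp <;> ring
  one_mul p := by ext <;> simp
  mul_one p := by ext <;> simp
  inv_mul_cancel p := by ext <;> simp

lemma commutator_elt (p q : Heis) :
    ⁅p, q⁆ = ⟨0, 0, p.a * q.b - q.a * p.b⟩ := by
  show p * q * p⁻¹ * q⁻¹ = _
  ext <;> simp <;> ring

lemma mem_center_of_ab_zero {p : Heis} (ha : p.a = 0) (hb : p.b = 0) :
    p ∈ Subgroup.center Heis := by
  rw [Subgroup.mem_center_iff]
  intro g
  ext <;> simp [ha, hb] <;> ring

lemma lcs_two : (⊤ : Subgroup Heis).lowerCentralSeries 2 = ⊥ := by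
  apply lowerCentralSeries_succ_eq_bot
  rw [lowerCentralSeries_one, commutator, Subgroup.commutator_le]
  intro g₁ _ g₂ _
  rw [commutator_elt]
  exact mem_center_of_ab_zero rfl rfl

def A : Heis := ⟨0, 1, 0⟩
def B : Heis := ⟨1, 0, 0⟩

lemma B_zpow (m : ℤ) : B ^ m = ⟨m, 0, 0⟩ := by
  induction m using Int.induction_on with
  | zero => rw [zpow_zero]; rfl
  | succ n ih =>
    rw [zpow_add_one, ih]
    ext <;> simp [B] <;> push_cast <;> ring
  | pred n ih =>
    rw [zpow_sub_one, ih]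
    ext <;> simp [B] <;> push_cast <;> ring

end Heis

/-- Let `φ` be the automorphism of the free group `F = F(x,y,z)` with `φ(x) = xz`,
`φ(y) = y`, `φ(z) = z` (here `x = of 0`, `y = of 1`, `z = of 2`).  Then for every
nonzero integer `m`, every `g ∈ F` and every `u ∈ γ₃(F)`, one has
`φ^m(⁅x,y⁆) ≠ u · g ⁅x,y⁆ g⁻¹`; in particular no nonzero power of `φ` agrees with an
inner automorphism on `⁅x,y⁆` modulo `γ₃(F)`. -/
theorem pow_transvection_not_inner_mod_gamma3
    (φ : MulAut (FreeGroup (Fin 3)))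
    (hx : φ (FreeGroup.of 0) = FreeGroup.of 0 * FreeGroup.of 2)
    (hy : φ (FreeGroup.of 1) = FreeGroup.of 1)
    (hz : φ (FreeGroup.of 2) = FreeGroup.of 2) :
    ∀ m : ℤ, m ≠ 0 → ∀ g : FreeGroup (Fin 3),
      ∀ u ∈ (⊤ : Subgroup (FreeGroup (Fin 3))).lowerCentralSeries 2,
        (φ ^ m) ⁅FreeGroup.of (0 : Fin 3), FreeGroup.of (1 : Fin 3)⁆ ≠
          u * (g * ⁅FreeGroup.of (0 : Fin 3), FreeGroup.of (1 : Fin 3)⁆ * g⁻¹) := by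
  set x : FreeGroup (Fin 3) := FreeGroup.of 0 with hxdef
  set y : FreeGroup (Fin 3) := FreeGroup.of 1 with hydef
  set z : FreeGroup (Fin 3) := FreeGroup.of 2 with hzdef
  -- φ⁻¹ on generators
  have hxinv : φ⁻¹ x = x * z⁻¹ := by
    apply φ.injective
    rw [show φ (φ⁻¹ x) = x by simp, map_mul, map_inv, hx, hz,
      mul_assoc, mul_inv_cancel, mul_one]
  have hyinv : φ⁻¹ y = y := by
    apply φ.injective
    rw [show φ (φ⁻¹ y) = y by simp, hy]
  have hzinv : φ⁻¹ z = z := by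
    apply φ.injective
    rw [show φ (φ⁻¹ z) = z by simp, hz]
  -- action of φ^m on generators
  have key : ∀ m : ℤ, (φ ^ m) x = x * z ^ m ∧ (φ ^ m) y = y ∧ (φ ^ m) z = z := by
    intro m
    induction m using Int.induction_on with
    | zero => simp
    | succ n ih =>
      obtain ⟨h1, h2, h3⟩ := ih
      have e : φ ^ ((n : ℤ) + 1) = φ ^ (n : ℤ) * φ := zpow_add_one φ n
      refine ⟨?_, ?_, ?_⟩
      · rw [e, MulAut.mul_apply, hx, map_mul, h1, h3, mul_assoc, ← zpow_add_one]
      · rw [e, MulAut.mul_apply, hy, h2]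
      · rw [e, MulAut.mul_apply, hz, h3]
    | pred n ih =>
      obtain ⟨h1, h2, h3⟩ := ih
      have e : φ ^ (-(n : ℤ) - 1) = φ ^ (-(n : ℤ)) * φ⁻¹ := zpow_sub_one φ (-n)
      have h3inv : (φ ^ (-(n : ℤ))) z⁻¹ = z⁻¹ := by rw [map_inv, h3]
      refine ⟨?_, ?_, ?_⟩
      · rw [e, MulAut.mul_apply, hxinv, map_mul, h1, h3inv, mul_assoc, ← zpow_sub_one]
      · rw [e, MulAut.mul_apply, hyinv, h2]
      · rw [e, MulAut.mul_apply, hzinv, h3]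
  intro m hm g u hu heq
  obtain ⟨h1, h2, h3⟩ := key m
  -- the morphism to the Heisenberg group
  set ψ : FreeGroup (Fin 3) →* Heis :=
    FreeGroup.lift (fun i => if i = 1 then Heis.A else if i = 2 then Heis.B else 1) with hψ
  have ψx : ψ x = 1 := by simp [hψ, hxdef]
  have ψy : ψ y = Heis.A := by simp [hψ, hydef]
  have ψz : ψ z = Heis.B := by simp [hψ, hzdef]
  have ψu : ψ u = 1 := by
    have : ψ u ∈ (⊤ : Subgroup Heis).lowerCentralSeries 2 :=
      lowerCentralSeries.map ψ 2 ⟨u, hu, rfl⟩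
    rwa [Heis.lcs_two, Subgroup.mem_bot] at this
  -- apply ψ to both sides
  have := congrArg ψ heq
  rw [map_commutatorElement, h1, h2] at this
  rw [map_commutatorElement, map_mul, map_zpow, ψx, ψy, ψz, one_mul] at this
  rw [map_mul, map_mul, map_mul, map_inv, map_commutatorElement, ψu, ψx, ψy,
    one_mul] at this
  rw [show ⁅(1 : Heis), Heis.A⁆ = 1 by rw [Heis.commutator_elt]; rfl, mul_one,
    mul_inv_cancel, Heis.B_zpow, Heis.commutator_elt] at this
  have := congrArg Heis.c this
  simp [Heis.A] at this
  exact hm this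
end

section
/- Let m ≥ 2 be an integer, let H be a group with trivial centre, let η : H → (ℤ/mℤ)² be a surjective homomorphism, and let x, y ∈ H be elements with η(x) = (1,0) and η(y) = (0,1). Let F be a free abelian group of rank 2 with basis {a, b} (written multiplicatively), and let G ≤ F × H be the subgroup generated by the elements (a^m, 1), (b^m, 1), (a, x), (b, y) together with the subgroup {1} × ker(η). Then: (1) the subgroup G₀ := ⟨a^m, b^m⟩ × ker(η) is a normal subgroup of finite index in G, and G has finite index in F × H; (2) G ∩ (F × {1}) = ⟨a^m, b^m⟩ × {1}, and this subgroup is exactly the centre of G; (3) the restriction to G of the coordinate projection F × H → F is surjective; (4) consequently, writing α and β for the images of (a,x) and (b,y) in the abelianisation G_ab, the subgroup ⟨α, β⟩ ≤ G_ab is free abelian of rank 2, there is a subgroup W ≤ G_ab (namely the image of G ∩ ({1} × H) in G_ab) with G_ab = ⟨α, β⟩ ⊕ W, and the image of the centre of G under the induced surjection G_ab → F equals ⟨a^m, b^m⟩. -/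
/-- The construction of a special group whose centre is a poison subgroup
(Example 4.12 in the paper), part (1):  Let `m ≥ 2`, let `H` be a group with
trivial centre, `η : H → (ℤ/mℤ)²` a surjective homomorphism, `x, y ∈ H` with
`η(x) = (1,0)`, `η(y) = (0,1)`.  Let `F` be free abelian of rank `2` with basis
`{a, b}` (written multiplicatively) and let `G ≤ F × H` be the subgroup generated
by `(aᵐ,1), (bᵐ,1), (a,x), (b,y)` together with `{1} × ker η`.  Then:
(1) `G₀ = ⟨aᵐ,bᵐ⟩ × ker η` is a normal finite-index subgroup of `G` and `G` has
finite index in `F × H`;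
(2) `G ∩ (F × {1}) = ⟨aᵐ,bᵐ⟩ × {1}`, and this subgroup is exactly the centre of `G`;
(3) the coordinate projection `F × H → F` restricted to `G` is surjective;
(4) writing `α, β` for the images of `(a,x), (b,y)` in the abelianisation `G_ab`,
the subgroup `⟨α,β⟩` is free abelian of rank 2, `G_ab = ⟨α,β⟩ ⊕ W` where `W` is
the image of `G ∩ ({1} × H)` in `G_ab`, and the image of the centre of `G` under
the induced surjection `G_ab → F` equals `⟨aᵐ,bᵐ⟩`. -/
theorem poison_centre_example
    (m : ℕ) (hm : 2 ≤ m)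
    (H : Type*) [Group H] (hZ : Subgroup.center H = ⊥)
    (η : H →* Multiplicative (ZMod m × ZMod m)) (hη : Function.Surjective η)
    (x y : H)
    (hx : η x = Multiplicative.ofAdd ((1 : ZMod m), (0 : ZMod m)))
    (hy : η y = Multiplicative.ofAdd ((0 : ZMod m), (1 : ZMod m)))
    (F : Type*) [CommGroup F]
    (bF : Module.Basis (Fin 2) ℤ (Additive F)) (a b : F)
    (ha : bF 0 = Additive.ofMul a) (hb : bF 1 = Additive.ofMul b)
    (G : Subgroup (F × H))
    (hG : G = Subgroup.closure
      (({(a ^ m, 1), (b ^ m, 1), (a, x), (b, y)} : Set (F × H)) ∪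
        (((⊥ : Subgroup F).prod η.ker : Subgroup (F × H)) : Set (F × H)))) :
    ∀ K : Subgroup F, K = Subgroup.closure {a ^ m, b ^ m} →
      -- (1)
      (K.prod η.ker ≤ G ∧
        ((K.prod η.ker).subgroupOf G).Normal ∧
        ((K.prod η.ker).subgroupOf G).FiniteIndex ∧
        G.FiniteIndex) ∧
      -- (2)
      (G ⊓ (⊤ : Subgroup F).prod (⊥ : Subgroup H) = K.prod ⊥ ∧
        (K.prod (⊥ : Subgroup H)).subgroupOf G = Subgroup.center ↥G) ∧
      -- (3)
      Subgroup.map (MonoidHom.fst F H) G = ⊤ ∧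
      -- (4)
      (∀ (hax : (a, x) ∈ G) (hby : (b, y) ∈ G),
        ∀ α β : Abelianization ↥G,
          α = Abelianization.of (⟨(a, x), hax⟩ : ↥G) →
          β = Abelianization.of (⟨(b, y), hby⟩ : ↥G) →
          ∀ W : Subgroup (Abelianization ↥G),
            W = Subgroup.map Abelianization.of
                  (((⊥ : Subgroup F).prod (⊤ : Subgroup H)).subgroupOf G) →
            Nonempty (↥(Subgroup.closure {α, β}) ≃* Multiplicative (ℤ × ℤ)) ∧
            (Subgroup.closure {α, β} ⊔ W = ⊤ ∧ Subgroup.closure {α, β} ⊓ W = ⊥) ∧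
            Subgroup.map (Abelianization.lift ((MonoidHom.fst F H).comp G.subtype))
                (Subgroup.map Abelianization.of (Subgroup.center ↥G)) = K) := by
  haveI : NeZero m := ⟨by omega⟩
  intro K hK
  -- ## coordinates on F
  obtain ⟨cf, cf_mul, cf_a, cf_b, decomp⟩ :
      ∃ cf : F → ℤ × ℤ, (∀ f g, cf (f * g) = cf f + cf g) ∧ cf a = (1, 0) ∧ cf b = (0, 1) ∧
        ∀ f, a ^ (cf f).1 * b ^ (cf f).2 = f := by
    refine ⟨fun f => (bF.repr (Additive.ofMul f) 0, bF.repr (Additive.ofMul f) 1),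
      fun f g => by simp [Prod.ext_iff, ofMul_mul], ?_, ?_, fun f => ?_⟩
    · simp [← ha, Finsupp.single_apply]
    · simp [← hb, Finsupp.single_apply]
    · have h1 := bF.sum_repr (Additive.ofMul f)
      rw [Fin.sum_univ_two, ha, hb] at h1
      refine Additive.ofMul.injective ?_
      rw [ofMul_mul, ofMul_zpow, ofMul_zpow]
      exact h1
  have cf_zpow : ∀ (f : F) (z : ℤ), cf (f ^ z) = z • cf f := by
    intro f z
    have h := map_zpow (MonoidHom.mk' (fun f => Multiplicative.ofAdd (cf f))
      (fun u v => by show Multiplicative.ofAdd (cf (u * v)) = _; rw [cf_mul]; rfl)) f z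
    have h2 : Multiplicative.ofAdd (cf (f ^ z)) = Multiplicative.ofAdd (cf f) ^ z := h
    simpa [toAdd_zpow] using congrArg Multiplicative.toAdd h2
  have cf_ab : ∀ i j : ℤ, cf (a ^ i * b ^ j) = (i, j) := by
    intro i j
    rw [cf_mul, cf_zpow, cf_zpow, cf_a, cf_b]
    simp [Prod.ext_iff]
  have cf_one : cf (1 : F) = 0 := by
    have h := cf_mul 1 1
    rw [mul_one] at h
    exact left_eq_add.mp h
  have cf_inj : ∀ i j : ℤ, a ^ i * b ^ j = 1 → i = 0 ∧ j = 0 := by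
    intro i j hij
    have h1 : ((i, j) : ℤ × ℤ) = 0 := by rw [← cf_ab i j, hij, cf_one]
    exact ⟨congrArg Prod.fst h1, congrArg Prod.snd h1⟩
  -- ## the mod-m coordinate homomorphism
  obtain ⟨φ, φ_eq⟩ :
      ∃ φ : F →* Multiplicative (ZMod m × ZMod m),
        ∀ f, φ f = Multiplicative.ofAdd (((cf f).1 : ZMod m), ((cf f).2 : ZMod m)) := by
    refine ⟨MonoidHom.mk' (fun f => Multiplicative.ofAdd (((cf f).1 : ZMod m), ((cf f).2 : ZMod m)))
      (fun u v => ?_), fun f => rfl⟩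
    show Multiplicative.ofAdd _ = _
    rw [cf_mul, Prod.fst_add, Prod.snd_add]
    push_cast
    rfl
  have φ_am : φ (a ^ m) = 1 := by
    rw [φ_eq, ← zpow_natCast, cf_zpow, cf_a]
    simp
  have φ_bm : φ (b ^ m) = 1 := by
    rw [φ_eq, ← zpow_natCast, cf_zpow, cf_b]
    simp
  have φ_a : φ a = Multiplicative.ofAdd ((1 : ZMod m), (0 : ZMod m)) := by
    rw [φ_eq, cf_a]; push_cast; rfl
  have φ_b : φ b = Multiplicative.ofAdd ((0 : ZMod m), (1 : ZMod m)) := by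
    rw [φ_eq, cf_b]; push_cast; rfl
  -- η on x^i y^j
  have η_xy : ∀ i j : ℤ, η (x ^ i * y ^ j) =
      Multiplicative.ofAdd (((i : ZMod m), (j : ZMod m))) := by
    intro i j
    rw [map_mul, map_zpow, map_zpow, hx, hy, ← ofAdd_zsmul, ← ofAdd_zsmul, ← ofAdd_add]
    congr 1
    simp [Prod.ext_iff, zsmul_eq_mul]
  -- K is the kernel of φ
  have hKker : K = φ.ker := by
    rw [hK]
    refine le_antisymm (Subgroup.closure_le _ |>.mpr ?_) ?_
    · intro f hf
      rcases hf with h | h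
      · subst h; exact φ_am
      · rw [Set.mem_singleton_iff] at h; subst h; exact φ_bm
    · intro f hf
      rw [MonoidHom.mem_ker, φ_eq, ← ofAdd_zero] at hf
      have h2 : ((cf f).1 : ZMod m) = 0 ∧ ((cf f).2 : ZMod m) = 0 := by
        have := Multiplicative.ofAdd.injective hf
        exact ⟨congrArg Prod.fst this, congrArg Prod.snd this⟩
      obtain ⟨i', hi'⟩ := (ZMod.intCast_zmod_eq_zero_iff_dvd _ m).mp h2.1
      obtain ⟨j', hj'⟩ := (ZMod.intCast_zmod_eq_zero_iff_dvd _ m).mp h2.2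
      have hf2 : ((a ^ m) ^ i') * ((b ^ m) ^ j') = f := by
        rw [← zpow_natCast a m, ← zpow_natCast b m, ← zpow_mul, ← zpow_mul,
          ← hi', ← hj', decomp]
      rw [← hf2]
      exact mul_mem (zpow_mem (Subgroup.subset_closure (by simp)) _)
        (zpow_mem (Subgroup.subset_closure (by simp)) _)
  -- ## the defining homomorphism ψ of G
  obtain ⟨ψ, ψ_eq⟩ :
      ∃ ψ : F × H →* Multiplicative (ZMod m × ZMod m), ∀ p, ψ p = φ p.1 * (η p.2)⁻¹ := by
    refine ⟨MonoidHom.mk' (fun p => φ p.1 * (η p.2)⁻¹) (fun p q => ?_), fun p => rfl⟩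
    show φ (p.1 * q.1) * (η (p.2 * q.2))⁻¹ = _
    rw [map_mul, map_mul, mul_inv, mul_mul_mul_comm]
  have mem_ψker : ∀ p : F × H, p ∈ ψ.ker ↔ φ p.1 = η p.2 := by
    intro p
    rw [MonoidHom.mem_ker, ψ_eq, mul_inv_eq_one]
  -- G is the kernel of ψ
  have hGψ : G = ψ.ker := by
    rw [hG]
    refine le_antisymm (Subgroup.closure_le _ |>.mpr ?_) ?_
    · rintro p (hp | hp)
      · simp only [Set.mem_insert_iff, Set.mem_singleton_iff] at hp
        rcases hp with h | h | h | h <;> subst h <;> rw [SetLike.mem_coe, mem_ψker]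
        · simpa using φ_am
        · simpa using φ_bm
        · rw [φ_a, hx]
        · rw [φ_b, hy]
      · rw [SetLike.mem_coe] at hp ⊢
        rw [Subgroup.mem_prod] at hp
        rw [mem_ψker]
        rw [φ_eq]
        have h1 : p.1 = 1 := hp.1
        have h2 : η p.2 = 1 := hp.2
        rw [h1, h2, cf_one]
        simp
    · intro p hp
      rw [mem_ψker] at hp
      obtain ⟨f, h⟩ := p
      simp only at hp
      set i := (cf f).1 with hi
      set j := (cf f).2 with hj
      have hxy : ((a, x) : F × H) ^ i * ((b, y) : F × H) ^ j = (a ^ i * b ^ j, x ^ i * y ^ j) := by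
        simp [Prod.pow_def, Prod.mul_def]
      have hw : η ((x ^ i * y ^ j)⁻¹ * h) = 1 := by
        rw [map_mul, map_inv, η_xy, ← hp, φ_eq]
        exact inv_mul_cancel _
      have hfh : (f, h) = ((a, x) : F × H) ^ i * ((b, y) : F × H) ^ j *
          (1, (x ^ i * y ^ j)⁻¹ * h) := by
        rw [hxy, Prod.mk_mul_mk, mul_one, decomp]
        congr 1
        group
      rw [hfh]
      refine mul_mem (mul_mem (zpow_mem (Subgroup.subset_closure ?_) _)
        (zpow_mem (Subgroup.subset_closure ?_) _)) (Subgroup.subset_closure ?_)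
      · left; simp
      · left; simp
      · right
        rw [SetLike.mem_coe, Subgroup.mem_prod]
        exact ⟨Subgroup.mem_bot.mpr rfl, hw⟩
  -- useful memberships
  have hax : (a, x) ∈ G := by rw [hGψ, mem_ψker, φ_a, hx]
  have hby : (b, y) ∈ G := by rw [hGψ, mem_ψker, φ_b, hy]
  have hker_mem : ∀ w : H, w ∈ η.ker → ((1 : F), w) ∈ G := by
    intro w hw
    rw [hGψ, mem_ψker]
    simp only
    rw [MonoidHom.mem_ker] at hw
    show φ (1 : F) = η w
    rw [φ_eq, cf_one, hw]
    simp
  have hK_mem : ∀ k : F, k ∈ K → ((k, (1 : H)) : F × H) ∈ G := by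
    intro k hk
    rw [hKker] at hk
    rw [hGψ, mem_ψker]
    simp only [map_one]
    exact hk
  -- generation of H
  have hHgen : ∀ u : H, ∃ i j : ℤ, ∃ w ∈ η.ker, u = x ^ i * y ^ j * w := by
    intro u
    set c := (Multiplicative.toAdd (η u)).1 with hc
    set d := (Multiplicative.toAdd (η u)).2 with hd
    refine ⟨(c.val : ℤ), (d.val : ℤ), (x ^ (c.val : ℤ) * y ^ (d.val : ℤ))⁻¹ * u, ?_, by group⟩
    rw [MonoidHom.mem_ker, map_mul, map_inv, η_xy]
    have h1 : ((c.val : ℤ) : ZMod m) = c := by push_cast; simp [ZMod.natCast_val, ZMod.cast_id]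
    have h2 : ((d.val : ℤ) : ZMod m) = d := by push_cast; simp [ZMod.natCast_val, ZMod.cast_id]
    rw [h1, h2]
    have : η u = Multiplicative.ofAdd (c, d) := by rw [hc, hd]; rfl
    rw [this]
    simp
  -- ## Part (1)
  have part1a : K.prod η.ker ≤ G := by
    rintro ⟨k, w⟩ hkw
    rw [Subgroup.mem_prod] at hkw
    have := mul_mem (hK_mem k hkw.1) (hker_mem w hkw.2)
    simpa using this
  haveI hKfin : K.FiniteIndex := by
    rw [hKker]
    infer_instance
  haveI hprodfin : (K.prod η.ker).FiniteIndex := by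
    constructor
    rw [Subgroup.index_prod]
    exact mul_ne_zero hKfin.index_ne_zero (Subgroup.finiteIndex_ker η).index_ne_zero
  have part1 : K.prod η.ker ≤ G ∧ ((K.prod η.ker).subgroupOf G).Normal ∧
      ((K.prod η.ker).subgroupOf G).FiniteIndex ∧ G.FiniteIndex := by
    refine ⟨part1a, ?_, ?_, ?_⟩
    · have : (K.prod η.ker).Normal := Subgroup.prod_normal K η.ker
      exact this.subgroupOf G
    · infer_instance
    · rw [hGψ]
      exact Subgroup.finiteIndex_ker ψ
  -- ## Part (2)
  have part2a : G ⊓ (⊤ : Subgroup F).prod (⊥ : Subgroup H) = K.prod ⊥ := by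
    ext ⟨f, h⟩
    simp only [Subgroup.mem_inf, Subgroup.mem_prod, Subgroup.mem_top, Subgroup.mem_bot, true_and]
    constructor
    · rintro ⟨hfG, hh⟩
      subst hh
      rw [hGψ, mem_ψker] at hfG
      simp only [map_one] at hfG
      rw [hKker]
      exact ⟨hfG, rfl⟩
    · rintro ⟨hfK, hh⟩
      subst hh
      exact ⟨hK_mem f hfK, rfl⟩
  have part2b : (K.prod (⊥ : Subgroup H)).subgroupOf G = Subgroup.center ↥G := by
    ext g
    rw [Subgroup.mem_subgroupOf, Subgroup.mem_center_iff]
    obtain ⟨⟨f, h⟩, hg⟩ := g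
    simp only [Subgroup.mem_prod, Subgroup.mem_bot]
    constructor
    · rintro ⟨hfK, hh⟩
      subst hh
      rintro ⟨⟨f', h'⟩, hg'⟩
      ext
      · exact mul_comm f' f
      · simp
    · intro hcen
      have hcomm : ∀ p : F × H, p ∈ G → p.2 * h = h * p.2 := by
        intro p hp
        have := congrArg (fun g : ↥G => ((g : F × H)).2) (hcen ⟨p, hp⟩)
        simpa using this
      have hhx : x * h = h * x := hcomm (a, x) hax
      have hhy : y * h = h * y := hcomm (b, y) hby
      have hcenter : h ∈ Subgroup.center H := by
        rw [Subgroup.mem_center_iff]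
        intro u
        obtain ⟨i, j, w, hw, rfl⟩ := hHgen u
        have c1 : Commute x h := hhx
        have c2 : Commute y h := hhy
        have c3 : Commute w h := hcomm (1, w) (hker_mem w hw)
        exact ((c1.zpow_left i).mul_left (c2.zpow_left j)).mul_left c3 |>.symm
          |> fun hcom => hcom.symm.eq
      have hh1 : h = 1 := by
        rw [hZ] at hcenter
        exact hcenter
      subst hh1
      refine ⟨?_, rfl⟩
      rw [hGψ, mem_ψker] at hg
      simp only [map_one] at hg
      rw [hKker]
      exact hg
  -- ## Part (3)
  have part3 : Subgroup.map (MonoidHom.fst F H) G = ⊤ := by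
    rw [eq_top_iff]
    intro f _
    obtain ⟨h, hh⟩ := hη (φ f)
    refine Subgroup.mem_map.mpr ⟨(f, h), ?_, rfl⟩
    rw [hGψ, mem_ψker]
    exact hh.symm
  refine ⟨part1, ⟨part2a, part2b⟩, part3, ?_⟩
  -- ## Part (4)
  intro hax' hby' α β hα hβ W hW
  set π : Abelianization ↥G →* F :=
    Abelianization.lift ((MonoidHom.fst F H).comp G.subtype) with hπ
  have πof : ∀ g : ↥G, π (Abelianization.of g) = ((g : F × H)).1 := fun g => rfl
  have πα : π α = a := by rw [hα]; exact πof _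
  have πβ : π β = b := by rw [hβ]; exact πof _
  have hαβ : ∀ i j : ℤ, π (α ^ i * β ^ j) = a ^ i * b ^ j := by
    intro i j
    rw [map_mul, map_zpow, map_zpow, πα, πβ]
  -- W is contained in the kernel of π
  have hWker : ∀ z ∈ W, π z = 1 := by
    intro z hz
    rw [hW] at hz
    obtain ⟨g, hg, rfl⟩ := Subgroup.mem_map.mp hz
    rw [Subgroup.mem_subgroupOf, Subgroup.mem_prod, Subgroup.mem_bot] at hg
    rw [πof]
    exact hg.1
  constructor
  · -- the free part
    have surj : Function.Surjective
        (fun z : ↥(Subgroup.closure {α, β}) => Multiplicative.ofAdd (cf (π z))) := by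
      intro t
      refine ⟨⟨α ^ (Multiplicative.toAdd t).1 * β ^ (Multiplicative.toAdd t).2, ?_⟩, ?_⟩
      · exact Subgroup.mem_closure_pair.mpr ⟨_, _, rfl⟩
      · simp only
        rw [hαβ, cf_ab]
        rfl
    have inj : Function.Injective
        (fun z : ↥(Subgroup.closure {α, β}) => Multiplicative.ofAdd (cf (π z))) := by
      intro z1 z2 hz
      obtain ⟨i1, j1, hz1⟩ := Subgroup.mem_closure_pair.mp z1.2
      obtain ⟨i2, j2, hz2⟩ := Subgroup.mem_closure_pair.mp z2.2
      simp only at hz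
      have h1 : cf (π z1) = cf (π z2) := Multiplicative.ofAdd.injective hz
      rw [← hz1, ← hz2, hαβ, hαβ, cf_ab, cf_ab] at h1
      have hi : i1 = i2 := congrArg Prod.fst h1
      have hj : j1 = j2 := congrArg Prod.snd h1
      ext
      rw [← hz1, ← hz2, hi, hj]
    refine ⟨MulEquiv.ofBijective (MonoidHom.mk'
      (fun z : ↥(Subgroup.closure {α, β}) => Multiplicative.ofAdd (cf (π z)))
      (fun z1 z2 => by
        show Multiplicative.ofAdd (cf (π ((z1 : Abelianization ↥G) * z2))) = _
        rw [map_mul, cf_mul]; rfl)) ⟨inj, surj⟩⟩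
  constructor
  · constructor
    · -- sup = ⊤
      rw [eq_top_iff]
      intro z _
      refine QuotientGroup.induction_on z ?_
      rintro ⟨⟨f, h⟩, hg⟩
      set μ : ↥G →* F := (MonoidHom.fst F H).comp G.subtype with hμ
      set i := (cf f).1 with hi
      set j := (cf f).2 with hj
      set g₀ : ↥G := (⟨(a, x), hax'⟩ : ↥G) ^ i * (⟨(b, y), hby'⟩ : ↥G) ^ j with hg₀
      have hwmem : (g₀⁻¹ * ⟨(f, h), hg⟩ : ↥G) ∈
          ((⊥ : Subgroup F).prod (⊤ : Subgroup H)).subgroupOf G := by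
        rw [Subgroup.mem_subgroupOf, Subgroup.mem_prod, Subgroup.mem_bot]
        refine ⟨?_, trivial⟩
        show μ (g₀⁻¹ * ⟨(f, h), hg⟩) = 1
        rw [map_mul, map_inv, hg₀, map_mul, map_zpow, map_zpow]
        have h1 : μ (⟨(a, x), hax'⟩ : ↥G) = a := rfl
        have h2 : μ (⟨(b, y), hby'⟩ : ↥G) = b := rfl
        have h3 : μ (⟨(f, h), hg⟩ : ↥G) = f := rfl
        rw [h1, h2, h3, hi, hj, decomp]
        group
      have hdecomp : Abelianization.of (⟨(f, h), hg⟩ : ↥G) =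
          α ^ i * β ^ j * Abelianization.of (g₀⁻¹ * ⟨(f, h), hg⟩) := by
        rw [map_mul, hα, hβ, ← map_zpow, ← map_zpow, ← map_mul, ← hg₀, map_inv,
          ← mul_assoc, mul_inv_cancel, one_mul]
      show Abelianization.of (⟨(f, h), hg⟩ : ↥G) ∈ _
      rw [hdecomp]
      refine mul_mem (Subgroup.mem_sup_left ?_) (Subgroup.mem_sup_right ?_)
      · exact mul_mem (zpow_mem (Subgroup.subset_closure (by simp)) _)
          (zpow_mem (Subgroup.subset_closure (by simp)) _)
      · rw [hW]
        exact Subgroup.mem_map.mpr ⟨_, hwmem, rfl⟩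
    · -- inf = ⊥
      rw [eq_bot_iff]
      rintro z ⟨hz1, hz2⟩
      obtain ⟨i, j, hij⟩ := Subgroup.mem_closure_pair.mp hz1
      have h1 : π z = 1 := hWker z hz2
      rw [← hij, hαβ] at h1
      obtain ⟨hi0, hj0⟩ := cf_inj i j h1
      rw [Subgroup.mem_bot, ← hij, hi0, hj0]
      simp
  · -- image of the centre
    rw [← part2b, Subgroup.map_map]
    have hcomp : ∀ S : Subgroup ↥G, Subgroup.map
        ((Abelianization.lift ((MonoidHom.fst F H).comp G.subtype)).comp
          Abelianization.of) S = Subgroup.map ((MonoidHom.fst F H).comp G.subtype) S := by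
      intro S
      congr 1
    rw [hcomp]
    ext f
    rw [Subgroup.mem_map]
    constructor
    · rintro ⟨g, hgmem, rfl⟩
      rw [Subgroup.mem_subgroupOf, Subgroup.mem_prod] at hgmem
      exact hgmem.1
    · intro hf
      refine ⟨⟨(f, 1), hK_mem f hf⟩, ?_, rfl⟩
      rw [Subgroup.mem_subgroupOf, Subgroup.mem_prod]
      exact ⟨hf, Subgroup.mem_bot.mpr rfl⟩
end
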